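/- arXiv:1708.06611 — 12 statements merged into one kernel-verified Lean document; each statement's English description precedes it below -/
import Mathlib

section
/- If (a_n) and (b_n) are sequences of real numbers with b_n > 0 for all n, and the sequence (a_n / b_n) is monotone increasing, then the sequence ((a_0 + ... + a_n) / (b_0 + ... + b_n)) is also monotone increasing. -/
/-! The partial sum `Aₙ₊₁ = Aₙ + aₙ₊₁` (and likewise `Bₙ₊₁`) turns `Aₙ₊₁ / Bₙ₊₁` into the mediant of
`Aₙ / Bₙ` and `aₙ₊₁ / bₙ₊₁`. Since every `aᵢ / bᵢ` with `i ≤ n` is at most `aₙ₊₁ / bₙ₊₁`, so is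
`Aₙ / Bₙ`, and a mediant is at least the smaller of the two fractions. -/

section LinearOrderedField

variable {α : Type*} [Field α] [LinearOrder α] [IsStrictOrderedRing α]

theorem div_le_add_div_add {a b c d : α} (hb : 0 < b) (hd : 0 < d) (h : a / b ≤ c / d) :
    a / b ≤ (a + c) / (b + d) := by
  rw [div_le_div_iff₀ hb hd] at h
  rw [div_le_div_iff₀ hb (add_pos hb hd)]
  linarith

theorem Finset.sum_div_sum_le_of_forall_div_le {ι : Type*} {s : Finset ι} {a b : ι → α} {c d : α}
    (hs : s.Nonempty) (hb : ∀ i ∈ s, 0 < b i) (hd : 0 < d) (h : ∀ i ∈ s, a i / b i ≤ c / d) :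
    (∑ i ∈ s, a i) / (∑ i ∈ s, b i) ≤ c / d := by
  rw [div_le_div_iff₀ (Finset.sum_pos hb hs) hd, Finset.sum_mul, Finset.mul_sum]
  refine Finset.sum_le_sum fun i hi => ?_
  exact (div_le_div_iff₀ (hb i hi) hd).mp (h i hi)

end LinearOrderedField

theorem partial_sum_ratio_monotone (a b : ℕ → ℝ) (hb : ∀ n, 0 < b n)
    (h : Monotone (fun n => a n / b n)) :
    Monotone (fun n => (∑ i ∈ Finset.range (n + 1), a i) / (∑ i ∈ Finset.range (n + 1), b i)) := by
  refine monotone_nat_of_le_succ fun n => ?_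
  have hsum_pos : 0 < ∑ i ∈ Finset.range (n + 1), b i :=
    Finset.sum_pos (fun i _ => hb i) Finset.nonempty_range_add_one
  have hratio_le : (∑ i ∈ Finset.range (n + 1), a i) / (∑ i ∈ Finset.range (n + 1), b i) ≤
      a (n + 1) / b (n + 1) :=
    Finset.sum_div_sum_le_of_forall_div_le Finset.nonempty_range_add_one (fun i _ => hb i)
      (hb (n + 1)) fun i hi => h (Finset.mem_range.mp hi).le
  simpa only [Finset.sum_range_succ _ (n + 1)] using
    div_le_add_div_add hsum_pos (hb (n + 1)) hratio_le
end

section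
/- Let A(x) = Σ a_n x^n and B(x) = Σ b_n x^n be power series convergent on [0, r) with b_n > 0 for all n. If the sequence (a_n / b_n) is strictly increasing, then the function x ↦ A(x)/B(x) is strictly increasing on (0, r). -/
/-!
Fix `0 < x < y < r` and put `t = A(x)/B(x)`. The coefficients
`c n = a n - t * b n = b n * (a n / b n - t)` of `A - t B` change sign at most once, from negative
to positive, at some index `N`, and `∑ c n x ^ n = 0`. Comparing termwise,
`c n * y ^ n ≥ (y / x) ^ N * c n * x ^ n` since both sides change sign at `N`, strictly at `n = N + 1`;
hence `A(y) - t B(y) = ∑ c n y ^ n > 0`.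
-/

theorem StrictMono.exists_sign_change {α : Type*} [LinearOrder α] {d : ℕ → α} {t : α}
    (hd : StrictMono d) (h : ∃ n, t ≤ d n) :
    ∃ N, (∀ n < N, d n < t) ∧ ∀ n, N < n → t < d n := by
  classical
  refine ⟨Nat.find h, fun n hn => not_le.1 (Nat.find_min h hn), fun n hn => ?_⟩
  exact (Nat.find_spec h).trans_lt (hd hn)

theorem div_pow_mul_lt_of_sign_change {c : ℕ → ℝ} {x y S T : ℝ} {N : ℕ} (hx : 0 < x)
    (hxy : x < y) (hneg : ∀ n < N, c n ≤ 0) (hpos : ∀ n, N < n → 0 < c n)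
    (hS : HasSum (fun n => c n * x ^ n) S) (hT : HasSum (fun n => c n * y ^ n) T) :
    (y / x) ^ N * S < T := by
  have hq : 1 < y / x := (one_lt_div hx).2 hxy
  have hy : ∀ n, y ^ n = x ^ n * (y / x) ^ n := fun n => by
    rw [← mul_pow, mul_div_cancel₀ _ hx.ne']
  have hterm : ∀ n, (y / x) ^ N * (c n * x ^ n) ≤ c n * y ^ n := fun n => by
    rw [hy, ← mul_assoc (c _), mul_comm ((y / x) ^ N)]
    rcases lt_or_ge n N with hn | hn
    · exact mul_le_mul_of_nonpos_left (pow_le_pow_right₀ hq.le hn.le)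
        (mul_nonpos_of_nonpos_of_nonneg (hneg n hn) (pow_pos hx n).le)
    · rcases hn.eq_or_lt with rfl | hn
      · rfl
      · exact mul_le_mul_of_nonneg_left (pow_le_pow_right₀ hq.le hn.le)
          (mul_pos (hpos n hn) (pow_pos hx n)).le
  have hstrict : (y / x) ^ N * (c (N + 1) * x ^ (N + 1)) < c (N + 1) * y ^ (N + 1) := by
    rw [hy, ← mul_assoc (c _), mul_comm ((y / x) ^ N)]
    exact mul_lt_mul_of_pos_left (pow_lt_pow_right₀ hq N.lt_succ_self)
      (mul_pos (hpos _ N.lt_succ_self) (pow_pos hx _))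
  exact hasSum_lt hterm hstrict (hS.mul_left _) hT

theorem pos_of_hasSum_mul_of_strictMono {b d : ℕ → ℝ} {x y S T : ℝ} (hb : ∀ n, 0 < b n)
    (hd : StrictMono d) (hx : 0 < x) (hxy : x < y)
    (hS : HasSum (fun n => b n * d n * x ^ n) S) (hT : HasSum (fun n => b n * d n * y ^ n) T)
    (hS0 : 0 ≤ S) : 0 < T := by
  have hd0 : ∃ n, 0 ≤ d n := by
    by_contra! hneg
    have : S < 0 := hasSum_lt (f := fun n => b n * d n * x ^ n) (i := 0)
      (fun n => mul_nonpos_of_nonpos_of_nonneg (mul_nonpos_of_nonneg_of_nonpos (hb n).le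
        (hneg n).le) (pow_pos hx n).le)
      (mul_neg_of_neg_of_pos (mul_neg_of_pos_of_neg (hb 0) (hneg 0)) (pow_pos hx 0))
      hS hasSum_zero
    linarith
  obtain ⟨N, hneg, hpos⟩ := hd.exists_sign_change hd0
  have hlt := div_pow_mul_lt_of_sign_change hx hxy
    (fun n hn => mul_nonpos_of_nonneg_of_nonpos (hb n).le (hneg n hn).le)
    (fun n hn => mul_pos (hb n) (hpos n hn)) hS hT
  exact (mul_nonneg (pow_nonneg (div_pos (hx.trans hxy) hx).le N) hS0).trans_lt hlt

theorem power_series_ratio_strictMono_general (a b : ℕ → ℝ) (r : ℝ)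
    (hb : ∀ n, 0 < b n)
    (ha_conv : ∀ x : ℝ, 0 ≤ x → x < r → Summable (fun n => a n * x ^ n))
    (hb_conv : ∀ x : ℝ, 0 ≤ x → x < r → Summable (fun n => b n * x ^ n))
    (h : StrictMono (fun n => a n / b n)) :
    StrictMonoOn (fun x => (∑' n, a n * x ^ n) / (∑' n, b n * x ^ n)) (Set.Ioo 0 r) := by
  rintro x ⟨hx, hxr⟩ y ⟨hy, hyr⟩ hxy
  set t := (∑' n, a n * x ^ n) / (∑' n, b n * x ^ n)
  have hB : ∀ z, 0 < z → z < r → 0 < ∑' n, b n * z ^ n := fun z hz hzr =>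
    (hb_conv z hz.le hzr).tsum_pos (fun n => (mul_pos (hb n) (pow_pos hz n)).le) 0
      (mul_pos (hb 0) (pow_pos hz 0))
  have hsum : ∀ z, 0 < z → z < r → HasSum (fun n => b n * (a n / b n - t) * z ^ n)
      ((∑' n, a n * z ^ n) - t * ∑' n, b n * z ^ n) := fun z hz hzr => by
    have hcoef : (fun n => b n * (a n / b n - t) * z ^ n) =
        fun n => a n * z ^ n - t * (b n * z ^ n) := by
      funext n
      field_simp [(hb n).ne']
    exact hcoef ▸ (ha_conv z hz.le hzr).hasSum.sub ((hb_conv z hz.le hzr).hasSum.mul_left t)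
  have hx0 : (∑' n, a n * x ^ n) - t * ∑' n, b n * x ^ n = 0 := by
    rw [div_mul_cancel₀ _ (hB x hx hxr).ne', sub_self]
  have hd : StrictMono fun n => a n / b n - t := fun m n hmn => sub_lt_sub_right (h hmn) t
  have hy0 := pos_of_hasSum_mul_of_strictMono hb hd hx hxy (hx0 ▸ hsum x hx hxr)
    (hsum y hy hyr) le_rfl
  exact (lt_div_iff₀ (hB y hy hyr)).2 (by linarith)

theorem power_series_ratio_strictMono (a b : ℕ → ℝ) (r : ℝ) (hr : 0 < r)
    (hb : ∀ n, 0 < b n)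
    (ha_conv : ∀ x : ℝ, 0 ≤ x → x < r → Summable (fun n => a n * x ^ n))
    (hb_conv : ∀ x : ℝ, 0 ≤ x → x < r → Summable (fun n => b n * x ^ n))
    (h : StrictMono (fun n => a n / b n)) :
    StrictMonoOn (fun x => (∑' n, a n * x ^ n) / (∑' n, b n * x ^ n)) (Set.Ioo 0 r) :=
  power_series_ratio_strictMono_general a b r hb ha_conv hb_conv h
end

section
/- For all real z, cosh z ≤ (sinh z / z)³ where at z = 0 the right-hand side is interpreted as 1. -/
open Real

private lemma exp_lower_poly (z : ℝ) (hz : 0 ≤ z) :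
    1 + z + z^2/2 + z^3/6 + z^4/24 + z^5/120 ≤ Real.exp z := by
  have h := Real.sum_le_exp_of_nonneg hz 6
  simp [Finset.sum_range_succ, Nat.factorial] at h
  linarith

private lemma exp_neg_upper_poly (z : ℝ) (hz : 0 ≤ z) :
    Real.exp (-z) ≤ 1 - z + z^2/2 - z^3/6 + z^4/24 := by
  have hP : 1 + z + z^2/2 + z^3/6 + z^4/24 + z^5/120 ≤ Real.exp z := exp_lower_poly z hz
  have hPpos : (0:ℝ) < 1 + z + z^2/2 + z^3/6 + z^4/24 + z^5/120 := by positivity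
  have h1 : Real.exp (-z) = 1 / Real.exp z := by rw [Real.exp_neg]; ring
  rw [h1]
  have h2 : 1 / Real.exp z ≤ 1 / (1 + z + z^2/2 + z^3/6 + z^4/24 + z^5/120) :=
    one_div_le_one_div_of_le hPpos hP
  refine h2.trans ?_
  rw [div_le_iff₀ hPpos]
  nlinarith [pow_nonneg hz 5, pow_nonneg hz 6, pow_nonneg hz 7, pow_nonneg hz 8,
    pow_nonneg hz 9]

private lemma sinh_lower_poly (z : ℝ) (hz : 0 ≤ z) :
    z + z^3/6 + z^5/240 ≤ Real.sinh z := by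
  have h1 := exp_lower_poly z hz
  have h2 := exp_neg_upper_poly z hz
  rw [Real.sinh_eq]
  linarith

private lemma key_poly (z : ℝ) (hz : 0 ≤ z) :
    z^3 * (1 - z + z^2/2 - z^3/6 + z^4/24)
      ≤ (z + z^3/6 + z^5/240)^3 - z^3 * (z + z^3/6 + z^5/240) := by
  have hq : (0:ℝ) ≤ 13/240 - z/240 + 19/2160 * z^2 := by nlinarith [sq_nonneg (38*z - 9)]
  nlinarith [mul_nonneg (pow_nonneg hz 7) hq, pow_nonneg hz 11, pow_nonneg hz 13,
    pow_nonneg hz 15]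

private lemma lazarevic_pos (z : ℝ) (hz : 0 < z) :
    z^3 * Real.cosh z ≤ (Real.sinh z)^3 := by
  set s := Real.sinh z with hs
  have hzle : (0:ℝ) ≤ z := hz.le
  have hp : z + z^3/6 + z^5/240 ≤ s := sinh_lower_poly z hzle
  have hppos : (0:ℝ) < z + z^3/6 + z^5/240 := by positivity
  have hcosh : Real.cosh z = s + Real.exp (-z) := by
    have := Real.cosh_sub_sinh z; linarith
  have hq := exp_neg_upper_poly z hzle
  have hkey := key_poly z hzle
  -- s^3 - z^3*s ≥ p^3 - z^3*p where p = z + z^3/6 + z^5/240, since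
  -- the difference factors as (s - p)(s^2 + s*p + p^2 - z^3) and s^2+s*p+p^2 ≥ 3p^2 ≥ z^3
  have h3p2 : z^3 ≤ 3 * (z + z^3/6 + z^5/240)^2 := by
    nlinarith [sq_nonneg (z^2 - z), sq_nonneg z, pow_nonneg hzle 4, pow_nonneg hzle 6,
      pow_nonneg hzle 8, pow_nonneg hzle 10]
  have hmono : (z + z^3/6 + z^5/240)^3 - z^3 * (z + z^3/6 + z^5/240) ≤ s^3 - z^3 * s := by
    nlinarith [mul_nonneg (sub_nonneg.mpr hp) (sub_nonneg.mpr hp), sub_nonneg.mpr hp,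
      mul_nonneg (mul_nonneg (sub_nonneg.mpr hp) (sub_nonneg.mpr hp)) (sub_nonneg.mpr hp),
      mul_nonneg (sub_nonneg.mpr hp) hppos.le]
  have hz3 : (0:ℝ) < z^3 := by positivity
  have : z^3 * Real.exp (-z) ≤ z^3 * (1 - z + z^2/2 - z^3/6 + z^4/24) := by
    exact mul_le_mul_of_nonneg_left hq hz3.le
  rw [hcosh]
  nlinarith

theorem lazarevic_cosh_sinh (z : ℝ) :
    Real.cosh z ≤ (if z = 0 then 1 else Real.sinh z / z) ^ 3 := by
  rcases eq_or_ne z 0 with rfl | hne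
  · simp
  · rw [if_neg hne]
    rcases hne.lt_or_gt with hneg | hpos
    · have h := lazarevic_pos (-z) (by linarith)
      have hz3 : (0:ℝ) < (-z)^3 := pow_pos (by linarith) 3
      rw [Real.cosh_neg, Real.sinh_neg] at h
      have : Real.sinh z / z = Real.sinh (-z) / (-z) := by
        rw [Real.sinh_neg]; field_simp
      rw [this, Real.sinh_neg, div_pow, le_div_iff₀ (by positivity)]
      nlinarith
    · have h := lazarevic_pos z hpos
      rw [div_pow, le_div_iff₀ (by positivity)]
      linarith
end

section
/- For all real z ≠ 0, (sinh z / z)² + (tanh z)/z ≥ 2. -/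
open Real

private lemma aux_nonneg_of_deriv {f : ℝ → ℝ} (hd : Differentiable ℝ f)
    (h0 : f 0 = 0) (h' : ∀ x, 0 ≤ x → 0 ≤ deriv f x) {x : ℝ} (hx : 0 ≤ x) :
    0 ≤ f x := by
  have hmono : MonotoneOn f (Set.Ici (0:ℝ)) := by
    apply monotoneOn_of_deriv_nonneg (convex_Ici 0) hd.continuous.continuousOn
      (hd.differentiableOn)
    intro y hy
    exact h' y (le_of_lt (by simpa using hy))
  have := hmono (Set.self_mem_Ici) (by exact hx) hx
  simpa [h0] using this

private lemma aux_sinh_le_mul_cosh {x : ℝ} (hx : 0 ≤ x) :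
    Real.sinh x ≤ x * Real.cosh x := by
  have h := aux_nonneg_of_deriv (f := fun x => x * Real.cosh x - Real.sinh x)
    (by fun_prop) (by simp)
    (fun y hy => by
      have hd : HasDerivAt (fun x => x * Real.cosh x - Real.sinh x)
          (1 * Real.cosh y + y * Real.sinh y - Real.cosh y) y :=
        ((hasDerivAt_id y).mul (Real.hasDerivAt_cosh y)).sub (Real.hasDerivAt_sinh y)
      rw [hd.deriv]
      have h2 : 0 ≤ Real.sinh y := by rw [← Real.sinh_zero]; exact Real.sinh_le_sinh.2 hy
      nlinarith) hx
  have h' : (0:ℝ) ≤ x * Real.cosh x - Real.sinh x := h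
  linarith

private lemma aux_cosh_lb (x : ℝ) : 1 + x ^ 2 / 2 ≤ Real.cosh x := by
  have key : ∀ y : ℝ, 0 ≤ y → 1 + y ^ 2 / 2 ≤ Real.cosh y := by
    intro y hy
    have h := aux_nonneg_of_deriv (f := fun x => Real.cosh x - 1 - x ^ 2 / 2)
      (by fun_prop) (by simp)
      (fun t ht => by
        have hd : HasDerivAt (fun x => Real.cosh x - 1 - x ^ 2 / 2)
            (Real.sinh t - 0 - 2 * t ^ 1 / 2) t := by
          exact ((Real.hasDerivAt_cosh t).sub (hasDerivAt_const t 1)).sub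
            (((hasDerivAt_pow 2 t).div_const 2).congr_deriv (by ring))
        rw [hd.deriv]
        have := (Real.self_le_sinh_iff).2 ht
        simp only [pow_one]
        linarith) hy
    have h' : (0:ℝ) ≤ Real.cosh y - 1 - y ^ 2 / 2 := h
    linarith
  rcases le_total 0 x with h | h
  · exact key x h
  · have := key (-x) (by linarith)
    simpa using this

private lemma aux_sinh_lb {x : ℝ} (hx : 0 ≤ x) :
    x + x ^ 3 / 6 ≤ Real.sinh x := by
  have h := aux_nonneg_of_deriv (f := fun x => Real.sinh x - x - x ^ 3 / 6)
    (by fun_prop) (by simp)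
    (fun t ht => by
      have hd : HasDerivAt (fun x => Real.sinh x - x - x ^ 3 / 6)
          (Real.cosh t - 1 - 3 * t ^ 2 / 6) t :=
        ((Real.hasDerivAt_sinh t).sub (hasDerivAt_id t)).sub
          (((hasDerivAt_pow 3 t).div_const 6).congr_deriv (by norm_num))
      rw [hd.deriv]
      have := aux_cosh_lb t
      linarith) hx
  have h' : (0:ℝ) ≤ Real.sinh x - x - x ^ 3 / 6 := h
  linarith

private lemma aux_lazar {x : ℝ} (hx : 0 ≤ x) :
    (x - x ^ 3 / 3) * Real.cosh x ≤ Real.sinh x := by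
  have h := aux_nonneg_of_deriv (f := fun x => Real.sinh x - (x - x ^ 3 / 3) * Real.cosh x)
    (by fun_prop) (by simp)
    (fun t ht => by
      have hd : HasDerivAt (fun x => Real.sinh x - (x - x ^ 3 / 3) * Real.cosh x)
          (Real.cosh t - ((1 - 3 * t ^ 2 / 3) * Real.cosh t + (t - t ^ 3 / 3) * Real.sinh t)) t := by
        exact (Real.hasDerivAt_sinh t).sub
          ((((hasDerivAt_id t).sub ((hasDerivAt_pow 3 t).div_const 3)).mul
            (Real.hasDerivAt_cosh t)).congr_deriv (by norm_num))
      rw [hd.deriv]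
      have h1 := aux_sinh_le_mul_cosh ht
      have h2 : 0 ≤ Real.sinh t := by rw [← Real.sinh_zero]; exact Real.sinh_le_sinh.2 ht
      have h3 := Real.cosh_pos t
      nlinarith [mul_le_mul_of_nonneg_left h1 ht,
        mul_nonneg (mul_nonneg (mul_nonneg ht ht) ht) h2]) hx
  have h' : (0:ℝ) ≤ Real.sinh x - (x - x ^ 3 / 3) * Real.cosh x := h
  linarith

theorem wilker_hyperbolic (z : ℝ) (hz : z ≠ 0) :
    2 ≤ (Real.sinh z / z) ^ 2 + Real.tanh z / z := by
  have key : ∀ x : ℝ, 0 < x → 2 ≤ (Real.sinh x / x) ^ 2 + Real.tanh x / x := by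
    intro x hx
    have hc := Real.cosh_pos x
    have h1 : 1 + x ^ 2 / 6 ≤ Real.sinh x / x := by
      rw [le_div_iff₀ hx]
      have := aux_sinh_lb hx.le
      nlinarith
    have h1' : (1 + x ^ 2 / 6) ^ 2 ≤ (Real.sinh x / x) ^ 2 := by
      apply pow_le_pow_left₀ (by positivity) h1
    have h2 : 1 - x ^ 2 / 3 ≤ Real.tanh x / x := by
      rw [Real.tanh_eq_sinh_div_cosh, div_div, le_div_iff₀ (by positivity)]
      have := aux_lazar hx.le
      nlinarith
    nlinarith
  rcases hz.lt_or_gt with h | h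
  · have := key (-z) (by linarith)
    simpa [neg_div_neg_eq, Real.sinh_neg, Real.tanh_neg] using this
  · exact key z h
end

section
/- Let α₁ > 0, A₁ ≥ 0, and natural numbers j ≤ k. Define T(j) = Γ(α₁ + jA₁ + 1)·Γ(α₁ + (k-j)A₁ + 1) − Γ(α₁ + jA₁)·Γ(α₁ + (k-j)A₁ + 2). Then T(j) + T(k−j) < 0 for 0 ≤ j ≤ (k−1)/2, and if k is even then T(k/2) < 0. -/
private lemma T_eq (a b : ℝ) (ha : 0 < a) (hb : 0 < b) :
    Real.Gamma (a + 1) * Real.Gamma (b + 1) - Real.Gamma a * Real.Gamma (b + 2)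
      = Real.Gamma a * Real.Gamma b * (b * (a - b - 1)) := by
  have h1 : Real.Gamma (a + 1) = a * Real.Gamma a := Real.Gamma_add_one ha.ne'
  have h2 : Real.Gamma (b + 1) = b * Real.Gamma b := Real.Gamma_add_one hb.ne'
  have h3 : Real.Gamma (b + 1 + 1) = (b + 1) * Real.Gamma (b + 1) :=
    Real.Gamma_add_one (by positivity)
  rw [show b + 2 = b + 1 + 1 by ring, h3, h1, h2]; ring

theorem T1_sum_neg (α₁ A₁ : ℝ) (hα : 0 < α₁) (hA : 0 ≤ A₁) (k : ℕ) :
    let T : ℕ → ℝ := fun j =>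
      Real.Gamma (α₁ + j * A₁ + 1) * Real.Gamma (α₁ + ((k - j : ℕ) : ℝ) * A₁ + 1) -
        Real.Gamma (α₁ + j * A₁) * Real.Gamma (α₁ + ((k - j : ℕ) : ℝ) * A₁ + 2)
    (∀ j : ℕ, j ≤ k → 2 * j < k → T j + T (k - j) < 0) ∧
      (k % 2 = 0 → T (k / 2) < 0) := by
  intro T
  constructor
  · intro j hjk h2j
    set a : ℝ := α₁ + j * A₁ with ha_def
    set b : ℝ := α₁ + ((k - j : ℕ) : ℝ) * A₁ with hb_def
    have ha : 0 < a := by have : (0:ℝ) ≤ (j:ℝ) * A₁ := by positivity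
                          simp [ha_def]; linarith
    have hb : 0 < b := by have : (0:ℝ) ≤ ((k - j : ℕ):ℝ) * A₁ := by positivity
                          simp [hb_def]; linarith
    have hsub : k - (k - j) = j := Nat.sub_sub_self hjk
    have hT1 : T j = Real.Gamma a * Real.Gamma b * (b * (a - b - 1)) := by
      simp only [T]
      exact T_eq a b ha hb
    have hT2 : T (k - j) = Real.Gamma b * Real.Gamma a * (a * (b - a - 1)) := by
      simp only [T, hsub]
      exact T_eq b a hb ha
    rw [hT1, hT2]
    have hGa : 0 < Real.Gamma a := Real.Gamma_pos_of_pos ha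
    have hGb : 0 < Real.Gamma b := Real.Gamma_pos_of_pos hb
    nlinarith [sq_nonneg (a - b), mul_pos hGa hGb, mul_pos ha hb]
  · intro hk
    have hhalf : k - k / 2 = k / 2 := by omega
    set a : ℝ := α₁ + (k / 2 : ℕ) * A₁ with ha_def
    have ha : 0 < a := by have : (0:ℝ) ≤ ((k/2 : ℕ):ℝ) * A₁ := by positivity
                          simp [ha_def]; linarith
    have hT : T (k / 2) = Real.Gamma a * Real.Gamma a * (a * (a - a - 1)) := by
      simp only [T, hhalf]
      exact T_eq a a ha ha
    rw [hT]
    have hGa : 0 < Real.Gamma a := Real.Gamma_pos_of_pos ha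
    nlinarith [mul_pos (mul_pos hGa hGa) ha]
end

section
/- Fix α_1,…,α_p > 0 (p ≥ 1), β_2,…,β_q > 0, A_i ≥ 0, B_j ≥ 0 with 1 + ΣB_j − ΣA_i > 0, B_1 > 0, and fix z > 0. Then the function β₁ ↦ Γ(β₁) · Σ_{k=0}^∞ (∏_i Γ(α_i + kA_i)) / (Γ(β₁ + kB₁) ∏_{j≥2} Γ(β_j + kB_j)) · z^k / k! is log-convex on (0, ∞). -/
/-!
Each term of the series is `Γ(β₁) / Γ(β₁ + k B₁)` times a positive constant. The function
`x ↦ log Γ(x) - log Γ(x + a)` is convex for `a ≥ 0`: by the Euler–Gauss formula it is the limit of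
`-a log n + ∑_{m ≤ n} (log (x + m + a) - log (x + m))`, and `log (x + a) - log x` has the increasing
derivative `-a / (x (x + a))`. A convergent sum of log-convex functions is log-convex by Hölder's
inequality. The series converges by the ratio test: log-convexity of `Γ` gives
`(x - 1)^a ≤ Γ(x + a) / Γ(x) ≤ (x + a)^a`, so consecutive terms have ratio
`O(k^(∑ A - B₁ - ∑ B - 1)) → 0`.
-/

open Real Set Filter Topology Asymptotics
open scoped Nat

theorem ConvexOn.sum {ι E : Type*} [AddCommMonoid E] [Module ℝ E] {s : Set E}
    {t : Finset ι} {f : ι → E → ℝ} (hs : Convex ℝ s) (h : ∀ i ∈ t, ConvexOn ℝ s (f i)) :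
    ConvexOn ℝ s (∑ i ∈ t, f i) :=
  Finset.sum_induction f (ConvexOn ℝ s) (fun _ _ => ConvexOn.add) (convexOn_const 0 hs) h

theorem ConvexOn.of_tendsto {ι E : Type*} [AddCommMonoid E] [Module ℝ E] {s : Set E}
    {l : Filter ι} [l.NeBot] {F : ι → E → ℝ} {f : E → ℝ} (hF : ∀ n, ConvexOn ℝ s (F n))
    (hlim : ∀ x ∈ s, Tendsto (fun n => F n x) l (𝓝 (f x))) : ConvexOn ℝ s f := by
  have : Nonempty ι := l.nonempty_of_neBot
  have hs := (hF (Classical.arbitrary ι)).1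
  refine ⟨hs, ?_⟩
  intro x hx y hy a b ha hb hab
  exact le_of_tendsto_of_tendsto' (hlim _ (hs hx hy ha hb hab))
    (((hlim x hx).const_smul a).add ((hlim y hy).const_smul b))
    fun n => (hF n).2 hx hy ha hb hab

theorem convexOn_log_tsum {ι E : Type*} [Nonempty ι] [AddCommMonoid E] [Module ℝ E]
    {s : Set E} {f : ι → E → ℝ} (hf : ∀ i, ConvexOn ℝ s fun x => log (f i x))
    (hpos : ∀ i, ∀ x ∈ s, 0 < f i x) (hsum : ∀ x ∈ s, Summable fun i => f i x) :
    ConvexOn ℝ s fun x => log (∑' i, f i x) := by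
  obtain ⟨i₀⟩ := ‹Nonempty ι›
  refine convexOn_iff_forall_pos.mpr ⟨(hf i₀).1, fun x hx y hy a b ha hb hab => ?_⟩
  have htsum_pos : ∀ x ∈ s, 0 < ∑' i, f i x := fun x hx =>
    (hsum x hx).tsum_pos (fun i => (hpos i x hx).le) i₀ (hpos i₀ x hx)
  have hxy : a • x + b • y ∈ s := (hf i₀).1 hx hy ha.le hb.le hab
  have hterm : ∀ i, f i (a • x + b • y) ≤ f i x ^ a * f i y ^ b := by
    intro i
    have h := (hf i).2 hx hy ha.le hb.le hab
    have hx' := hpos i x hx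
    have hy' := hpos i y hy
    rwa [smul_eq_mul, smul_eq_mul, ← log_rpow hx', ← log_rpow hy', ← log_mul (by positivity)
      (by positivity), log_le_log_iff (hpos i _ hxy) (by positivity)] at h
  obtain ⟨hsum_prod, hholder⟩ := summable_and_inner_le_Lp_mul_Lq_tsum_of_nonneg
    (Real.HolderConjugate.inv_inv ha hb hab) (f := fun i => f i x ^ a) (g := fun i => f i y ^ b)
    (fun i => (rpow_pos_of_pos (hpos i x hx) a).le) (fun i => (rpow_pos_of_pos (hpos i y hy) b).le)
    (by simpa only [rpow_rpow_inv (hpos _ x hx).le ha.ne'] using hsum x hx)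
    (by simpa only [rpow_rpow_inv (hpos _ y hy).le hb.ne'] using hsum y hy)
  simp only [rpow_rpow_inv (hpos _ x hx).le ha.ne', rpow_rpow_inv (hpos _ y hy).le hb.ne',
    one_div, inv_inv] at hholder
  calc log (∑' i, f i (a • x + b • y))
      ≤ log ((∑' i, f i x) ^ a * (∑' i, f i y) ^ b) :=
        log_le_log (htsum_pos _ hxy) (((hsum _ hxy).tsum_le_tsum hterm hsum_prod).trans hholder)
    _ = a • log (∑' i, f i x) + b • log (∑' i, f i y) := by
        have := htsum_pos x hx
        have := htsum_pos y hy
        rw [log_mul (by positivity) (by positivity), log_rpow (htsum_pos x hx),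
          log_rpow (htsum_pos y hy), smul_eq_mul, smul_eq_mul]

theorem Real.convexOn_log_add_sub_log {a : ℝ} (ha : 0 ≤ a) :
    ConvexOn ℝ (Ioi 0) fun x => log (x + a) - log x := by
  have hderiv : ∀ x ∈ Ioi (0 : ℝ),
      HasDerivAt (fun x => log (x + a) - log x) ((x + a)⁻¹ - x⁻¹) x := fun x (hx : 0 < x) =>
    ((hasDerivAt_log (by positivity)).comp_add_const x a).sub (hasDerivAt_log hx.ne')
  refine MonotoneOn.convexOn_of_deriv (convex_Ioi 0)
    (fun x hx => (hderiv x hx).continuousAt.continuousWithinAt) ?_ ?_ <;> rw [interior_Ioi]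
  · exact fun x hx => (hderiv x hx).differentiableAt.differentiableWithinAt
  intro x (hx : 0 < x) y (hy : 0 < y) hxy
  have hslope : ∀ t, 0 < t → (t + a)⁻¹ - t⁻¹ = -(a / (t * (t + a))) := fun t ht => by
    field_simp
    ring
  rw [(hderiv x hx).deriv, (hderiv y hy).deriv, hslope x hx, hslope y hy, neg_le_neg_iff]
  gcongr

theorem Real.convexOn_log_Gamma_sub_log_Gamma_add {a : ℝ} (ha : 0 ≤ a) :
    ConvexOn ℝ (Ioi 0) fun x => log (Gamma x) - log (Gamma (x + a)) := by
  have hseq : ∀ n : ℕ, ConvexOn ℝ (Ioi 0)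
      fun x => BohrMollerup.logGammaSeq x n - BohrMollerup.logGammaSeq (x + a) n := by
    intro n
    have hshift : ∀ m ∈ Finset.range (n + 1), ConvexOn ℝ (Ioi 0)
        ((fun x => log (x + a) - log x) ∘ fun x => (m : ℝ) + x) := fun m _ =>
      ((convexOn_log_add_sub_log ha).translate_right (m : ℝ)).subset
        (fun x (hx : 0 < x) => show 0 < (m : ℝ) + x by positivity) (convex_Ioi 0)
    refine ((convexOn_const (-(a * log n)) (convex_Ioi 0)).add
      (ConvexOn.sum (convex_Ioi 0) hshift)).congr fun x _ => ?_
    have hsum : ∑ m ∈ Finset.range (n + 1), (log (m + x + a) - log (m + x)) =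
        ∑ m ∈ Finset.range (n + 1), log (x + a + m) - ∑ m ∈ Finset.range (n + 1), log (x + m) := by
      rw [← Finset.sum_sub_distrib]
      exact Finset.sum_congr rfl fun m _ => by rw [add_comm (m : ℝ) x, add_right_comm]
    simp only [BohrMollerup.logGammaSeq, Pi.add_apply, Finset.sum_apply, Function.comp_apply, hsum]
    ring
  exact ConvexOn.of_tendsto hseq fun x (hx : 0 < x) =>
    (BohrMollerup.tendsto_log_gamma hx).sub (BohrMollerup.tendsto_log_gamma (by positivity))

theorem Real.convexOn_log_mul_Gamma_div_Gamma_add {c a : ℝ} (hc : 0 < c) (ha : 0 ≤ a) :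
    ConvexOn ℝ (Ioi 0) fun x => log (c * (Gamma x / Gamma (x + a))) := by
  refine ((convexOn_log_Gamma_sub_log_Gamma_add ha).add_const (log c)).congr
    fun x (hx : 0 < x) => ?_
  rw [Pi.add_apply, log_mul hc.ne' (by positivity), log_div (by positivity) (by positivity)]
  ring

theorem Real.prod_Gamma_add_mul_pos {ι : Type*} {s : Finset ι} {α A : ι → ℝ}
    (hα : ∀ i, 0 < α i) (hA : ∀ i, 0 ≤ A i) {x : ℝ} (hx : 0 ≤ x) :
    0 < ∏ i ∈ s, Gamma (α i + x * A i) :=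
  Finset.prod_pos fun i _ => by
    have := hα i
    have := hA i
    positivity

theorem Real.Gamma_add_le_mul_rpow {x a : ℝ} (hx : 0 < x) (ha : 0 ≤ a) :
    Gamma (x + a) ≤ Gamma x * (x + a) ^ a := by
  rcases ha.eq_or_lt with rfl | ha
  · simp
  have hxa : 0 < x + a := by positivity
  -- the slope of `log ∘ Γ` on `[x + a, x + a + 1]` is `log (x + a)`
  have hslope := convexOn_log_Gamma.slope_mono_adjacent (x := x) (y := x + a) (z := x + a + 1)
    hx (by simp only [mem_Ioi]; positivity) (by linarith) (by linarith)
  simp only [Function.comp_apply, Gamma_add_one hxa.ne', log_mul hxa.ne' (Gamma_pos_of_pos hxa).ne',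
    add_sub_cancel_left, add_sub_cancel_right, div_one, div_le_iff₀ ha] at hslope
  rw [← log_le_log_iff (Gamma_pos_of_pos hxa) (by positivity), log_mul (Gamma_pos_of_pos hx).ne'
    (by positivity), log_rpow hxa]
  linarith

theorem Real.rpow_mul_Gamma_le_Gamma_add {x a : ℝ} (hx : 1 < x) (ha : 0 ≤ a) :
    (x - 1) ^ a * Gamma x ≤ Gamma (x + a) := by
  rcases ha.eq_or_lt with rfl | ha
  · simp
  have hx₁ : 0 < x - 1 := by linarith
  -- the slope of `log ∘ Γ` on `[x - 1, x]` is `log (x - 1)`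
  have hslope := convexOn_log_Gamma.slope_mono_adjacent (x := x - 1) (y := x) (z := x + a)
    hx₁ (by simp only [mem_Ioi]; linarith) (by linarith) (by linarith)
  have hΓ : Gamma x = (x - 1) * Gamma (x - 1) := by
    rw [← Gamma_add_one hx₁.ne', sub_add_cancel]
  simp only [Function.comp_apply, hΓ, log_mul hx₁.ne' (Gamma_pos_of_pos hx₁).ne',
    sub_sub_cancel, add_sub_cancel_left, div_one, le_div_iff₀ ha] at hslope
  rw [← log_le_log_iff (by positivity) (Gamma_pos_of_pos (by linarith)), log_mul (by positivity)
    (by positivity), log_rpow hx₁, hΓ, log_mul hx₁.ne' (Gamma_pos_of_pos hx₁).ne']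
  linarith

theorem Real.isBigO_Gamma_succ_div_Gamma {c a : ℝ} (hc : 0 < c) (ha : 0 ≤ a) :
    (fun k : ℕ => Gamma (c + (k + 1) * a) / Gamma (c + k * a)) =O[atTop]
      fun k => (k : ℝ) ^ a := by
  refine IsBigO.of_bound ((c + 2 * a) ^ a) ?_
  filter_upwards [eventually_ge_atTop 1] with k hk
  have hk : (1 : ℝ) ≤ k := by exact_mod_cast hk
  have hx : 0 < c + k * a := by positivity
  have hΓ := Gamma_add_le_mul_rpow hx ha
  rw [show c + k * a + a = c + (k + 1) * a by ring] at hΓ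
  rw [norm_of_nonneg (div_nonneg (Gamma_pos_of_pos (by positivity)).le (Gamma_pos_of_pos hx).le),
    norm_of_nonneg (by positivity), div_le_iff₀ (Gamma_pos_of_pos hx),
    ← mul_rpow (by positivity) (by positivity)]
  calc Gamma (c + (k + 1) * a) ≤ Gamma (c + k * a) * (c + (k + 1) * a) ^ a := hΓ
    _ ≤ Gamma (c + k * a) * ((c + 2 * a) * k) ^ a := by
        gcongr
        nlinarith
    _ = ((c + 2 * a) * k) ^ a * Gamma (c + k * a) := mul_comm _ _

theorem Real.isBigO_Gamma_div_Gamma_succ {c a : ℝ} (hc : 0 < c) (ha : 0 ≤ a) :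
    (fun k : ℕ => Gamma (c + k * a) / Gamma (c + (k + 1) * a)) =O[atTop]
      fun k => (k : ℝ) ^ (-a) := by
  rcases ha.eq_or_lt with rfl | ha
  · simp only [mul_zero, add_zero, neg_zero, rpow_zero]
    exact isBigO_refl _ _ |>.congr_left fun k => (div_self (Gamma_pos_of_pos hc).ne').symm
  refine IsBigO.of_bound ((a / 2) ^ (-a)) ?_
  filter_upwards [eventually_ge_atTop ⌈2 / a⌉₊] with k hk
  have hk : a / 2 * k ≥ 1 := by
    have := Nat.ceil_le.mp hk
    rw [div_le_iff₀ ha] at this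
    linarith
  have hx : 1 < c + k * a := by nlinarith
  have hx₁ : 0 < c + k * a - 1 := by linarith
  have hlow := rpow_mul_Gamma_le_Gamma_add hx ha.le
  rw [show c + k * a + a = c + (k + 1) * a by ring] at hlow
  have hΓ := Gamma_pos_of_pos (by linarith : 0 < c + k * a)
  rw [norm_of_nonneg (div_nonneg hΓ.le (Gamma_pos_of_pos (by positivity)).le),
    norm_of_nonneg (by positivity), ← mul_rpow (by positivity) (by positivity)]
  calc Gamma (c + k * a) / Gamma (c + (k + 1) * a)
      ≤ Gamma (c + k * a) / ((c + k * a - 1) ^ a * Gamma (c + k * a)) :=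
        div_le_div_of_nonneg_left hΓ.le (by positivity) hlow
    _ = (c + k * a - 1) ^ (-a) := by
        rw [rpow_neg hx₁.le]
        field_simp
    _ ≤ (a / 2 * k) ^ (-a) := rpow_le_rpow_of_nonpos (by linarith) (by nlinarith) (by linarith)

theorem summable_mul_pow_div_factorial_of_isBigO {g : ℕ → ℝ} {r : ℝ} (hr : r < 1)
    (hg₀ : ∀ k, g k ≠ 0) (hg : (fun k => g (k + 1) / g k) =O[atTop] fun k => (k : ℝ) ^ r)
    (z : ℝ) : Summable fun k => g k * z ^ k / k ! := by
  have hinv : (fun k : ℕ => ((k : ℝ) + 1)⁻¹) =O[atTop] fun k => (k : ℝ)⁻¹ := by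
    refine IsBigO.of_bound 1 ?_
    filter_upwards [eventually_gt_atTop 0] with k hk
    rw [one_mul, norm_inv, norm_inv, norm_of_nonneg (by positivity), norm_of_nonneg (by positivity)]
    gcongr
    linarith
  have hpow : Tendsto (fun k : ℕ => (k : ℝ) ^ r * (k : ℝ)⁻¹) atTop (𝓝 0) := by
    refine ((tendsto_rpow_neg_atTop (sub_pos.2 hr)).comp tendsto_natCast_atTop_atTop).congr' ?_
    filter_upwards [eventually_gt_atTop 0] with k hk
    rw [Function.comp_apply, neg_sub, rpow_sub_one (by positivity), div_eq_mul_inv]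
  have hratio : Tendsto (fun k : ℕ => z * (g (k + 1) / g k * ((k : ℝ) + 1)⁻¹)) atTop (𝓝 0) :=
    ((hg.mul hinv).const_mul_left z).trans_tendsto hpow
  refine summable_of_ratio_norm_eventually_le (r := 1 / 2) (by norm_num) ?_
  filter_upwards [(tendsto_zero_iff_norm_tendsto_zero.1 hratio).eventually
    (eventually_le_nhds (by norm_num : (0 : ℝ) < 1 / 2))] with k hk
  have hstep : g (k + 1) * z ^ (k + 1) / (k + 1)! =
      z * (g (k + 1) / g k * ((k : ℝ) + 1)⁻¹) * (g k * z ^ k / k !) := by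
    rw [Nat.factorial_succ, Nat.cast_mul, pow_succ]
    field_simp [hg₀ k]
    push_cast
    ring
  rw [hstep, norm_mul]
  gcongr

theorem summable_foxWright_terms {ι κ : Type*} [Fintype ι] [Fintype κ] {α A : ι → ℝ}
    {β B : κ → ℝ} {b B₁ : ℝ} (hα : ∀ i, 0 < α i) (hA : ∀ i, 0 ≤ A i) (hβ : ∀ j, 0 < β j)
    (hB : ∀ j, 0 ≤ B j) (hb : 0 < b) (hB₁ : 0 ≤ B₁)
    (hε : 0 < 1 + (B₁ + ∑ j, B j) - ∑ i, A i) (z : ℝ) :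
    Summable fun k : ℕ => (∏ i, Gamma (α i + k * A i)) /
      (Gamma (b + k * B₁) * ∏ j, Gamma (β j + k * B j)) * z ^ k / k ! := by
  have hprodα := fun {x : ℝ} (hx : 0 ≤ x) => prod_Gamma_add_mul_pos (s := Finset.univ) hα hA hx
  have hprodβ := fun {x : ℝ} (hx : 0 ≤ x) => prod_Gamma_add_mul_pos (s := Finset.univ) hβ hB hx
  refine summable_mul_pow_div_factorial_of_isBigO (r := ∑ i, A i - B₁ - ∑ j, B j) (by linarith)
    (fun k => ?_) ?_ z
  · have := hprodα k.cast_nonneg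
    have := hprodβ k.cast_nonneg
    positivity
  have hratio := (IsBigO.finsetProd (s := Finset.univ) fun i _ =>
      isBigO_Gamma_succ_div_Gamma (hα i) (hA i)).mul
    ((isBigO_Gamma_div_Gamma_succ hb hB₁).mul (IsBigO.finsetProd (s := Finset.univ) fun j _ =>
      isBigO_Gamma_div_Gamma_succ (hβ j) (hB j)))
  refine hratio.congr' (Eventually.of_forall fun k => ?_) ?_
  · have := hprodα k.cast_nonneg
    have := hprodβ k.cast_nonneg
    have := hprodβ (by positivity : (0 : ℝ) ≤ k + 1)
    push_cast
    rw [Finset.prod_div_distrib, Finset.prod_div_distrib]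
    field_simp
  · filter_upwards [eventually_gt_atTop 0] with k hk
    have hk : (0 : ℝ) < k := by exact_mod_cast hk
    rw [← rpow_sum_of_pos hk, ← rpow_sum_of_pos hk, ← rpow_add hk, ← rpow_add hk,
      Finset.sum_neg_distrib]
    ring_nf

theorem foxWright_logConvex_in_beta1 (p q : ℕ) (α A : Fin p → ℝ) (β B : Fin q → ℝ)
    (B₁ : ℝ) (hα : ∀ i, 0 < α i) (hA : ∀ i, 0 ≤ A i) (hβ : ∀ j, 0 < β j)
    (hB : ∀ j, 0 ≤ B j) (hB₁ : 0 < B₁)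
    (hε : 0 < 1 + (B₁ + ∑ j, B j) - ∑ i, A i) (z : ℝ) (hz : 0 < z) :
    ConvexOn ℝ (Set.Ioi 0) (fun b₁ : ℝ =>
      Real.log (Real.Gamma b₁ *
        ∑' k : ℕ, (∏ i, Real.Gamma (α i + k * A i)) /
          (Real.Gamma (b₁ + k * B₁) * ∏ j, Real.Gamma (β j + k * B j)) *
            z ^ k / (k.factorial : ℝ))) := by
  obtain ⟨D, hD_pos, hsplit⟩ : ∃ D : ℕ → ℝ, (∀ k, 0 < D k) ∧ ∀ (k : ℕ) (b : ℝ),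
      Gamma b * ((∏ i, Gamma (α i + k * A i)) /
        (Gamma (b + k * B₁) * ∏ j, Gamma (β j + k * B j)) * z ^ k / k !) =
          D k * (Gamma b / Gamma (b + k * B₁)) := by
    refine ⟨fun k => (∏ i, Gamma (α i + k * A i)) / (∏ j, Gamma (β j + k * B j)) * z ^ k / k !,
      fun k => ?_, fun k b => by ring⟩
    have := prod_Gamma_add_mul_pos (s := Finset.univ) hα hA k.cast_nonneg
    have := prod_Gamma_add_mul_pos (s := Finset.univ) hβ hB k.cast_nonneg
    positivity
  simp_rw [← tsum_mul_left, hsplit]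
  refine convexOn_log_tsum
    (fun k => convexOn_log_mul_Gamma_div_Gamma_add (hD_pos k) (by positivity))
    (fun k b (hb : 0 < b) => by positivity [hD_pos k]) fun b (hb : 0 < b) => ?_
  simpa only [hsplit] using
    (summable_foxWright_terms hα hA hβ hB hb hB₁.le hε z).mul_left (Gamma b)
end

section
/- Let f, g be arbitrary positive Gamma-ratio coefficients: fix α, β, β' > 0 with β' < β and B ≥ 0, and suppose both series F(z) = Σ_{k≥0} c_k z^k / Γ(β + kB) and G(z) = Σ_{k≥0} c_k z^k / Γ(β' + kB), with c_k > 0, converge for all z > 0. Then F(z)/G(z) is decreasing in z on (0, ∞). -/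
/-!
For `0 < x ≤ y`, cross-multiplying turns `F y * G x ≤ F x * G y` into an inequality between two
double series over `ℕ × ℕ`. Pairing the `(k, l)` and `(l, k)` terms reduces it to
`(a k * b l - a l * b k) * (y ^ k * x ^ l - x ^ k * y ^ l) ≤ 0`, where `a k` and `b k` are the
coefficients of `F` and `G`; this holds because `a k / b k = Γ(β' + k B) / Γ(β + k B)` is antitone.
That in turn is the log-convexity of `Γ`: the increments of `log Γ` over intervals of the fixed
length `β - β'` increase.
-/

open Real Set

theorem ConvexOn.map_add_sub_map_le {𝕜 : Type*} [Field 𝕜] [LinearOrder 𝕜] [IsStrictOrderedRing 𝕜]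
    {s : Set 𝕜} {f : 𝕜 → 𝕜} (hf : ConvexOn 𝕜 s f) {x y h : 𝕜} (hx : x ∈ s) (hy : y + h ∈ s)
    (hxy : x ≤ y) (hh : 0 ≤ h) : f (x + h) - f x ≤ f (y + h) - f y := by
  rcases hh.eq_or_lt with rfl | hh
  · simp
  have hxh : x + h ∈ s := hf.1.ordConnected.out hx hy ⟨by linarith, by linarith⟩
  have hy' : y ∈ s := hf.1.ordConnected.out hx hy ⟨hxy, by linarith⟩
  have hleft : slope f x (x + h) ≤ slope f x (y + h) :=
    hf.slope_mono hx ⟨hxh, (lt_add_of_pos_right x hh).ne'⟩ ⟨hy, (by linarith : x < y + h).ne'⟩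
      (by linarith)
  have hright : slope f (y + h) x ≤ slope f (y + h) y :=
    hf.slope_mono hy ⟨hx, (by linarith : x < y + h).ne⟩ ⟨hy', (lt_add_of_pos_right y hh).ne⟩ hxy
  have key : slope f x (x + h) ≤ slope f y (y + h) := by
    rw [slope_comm f y]
    exact (hleft.trans_eq (slope_comm f x (y + h))).trans hright
  rw [slope_def_field, slope_def_field, add_sub_cancel_left, add_sub_cancel_left] at key
  exact (div_le_div_iff_of_pos_right hh).1 key

theorem antitoneOn_Gamma_add_div_Gamma_add {a b : ℝ} (ha : 0 < a) (hab : a ≤ b) :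
    AntitoneOn (fun s => Gamma (a + s) / Gamma (b + s)) (Ici 0) := by
  intro s (hs : 0 ≤ s) t (ht : 0 ≤ t) hst
  have hb : 0 < b := ha.trans_le hab
  have key := convexOn_log_Gamma.map_add_sub_map_le (x := a + s) (y := a + t) (h := b - a)
    (by simp only [mem_Ioi]; positivity) (by simp only [mem_Ioi]; linarith) (by linarith)
    (by linarith)
  have hshift (r : ℝ) : a + r + (b - a) = b + r := by ring
  simp only [Function.comp_apply, hshift] at key
  rw [← log_le_log_iff (by positivity) (by positivity), log_div (by positivity) (by positivity),
    log_div (by positivity) (by positivity)]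
  linarith

theorem pow_mul_pow_le_pow_mul_pow {R : Type*} [CommSemiring R] [PartialOrder R]
    [IsOrderedRing R] {x y : R} (hx : 0 ≤ x) (hxy : x ≤ y) {k l : ℕ} (hkl : k ≤ l) :
    y ^ k * x ^ l ≤ x ^ k * y ^ l := by
  obtain ⟨m, rfl⟩ := Nat.exists_eq_add_of_le hkl
  calc y ^ k * x ^ (k + m) = (x * y) ^ k * x ^ m := by ring
    _ ≤ (x * y) ^ k * y ^ m := by gcongr; exact pow_nonneg (mul_nonneg hx (hx.trans hxy)) k
    _ = x ^ k * y ^ (k + m) := by ring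

theorem tsum_le_tsum_of_add_swap_le {α : Type*} {f g : α × α → ℝ} (hf : Summable f)
    (hg : Summable g) (h : ∀ p : α × α, f p + f p.swap ≤ g p + g p.swap) :
    ∑' p, f p ≤ ∑' p, g p := by
  have tsum_swap (φ : α × α → ℝ) : ∑' p : α × α, φ p.swap = ∑' p, φ p :=
    (Equiv.prodComm α α).tsum_eq φ
  have hsum := Summable.tsum_le_tsum h (hf.add hf.prod_symm) (hg.add hg.prod_symm)
  rw [hf.tsum_add hf.prod_symm, hg.tsum_add hg.prod_symm, tsum_swap, tsum_swap] at hsum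
  linarith

theorem antitoneOn_tsum_mul_pow_div_tsum_mul_pow {a b : ℕ → ℝ} (ha : ∀ k, 0 ≤ a k)
    (hb : ∀ k, 0 < b k) (hab : Antitone fun k => a k / b k)
    (hsa : ∀ z : ℝ, 0 < z → Summable fun k => a k * z ^ k)
    (hsb : ∀ z : ℝ, 0 < z → Summable fun k => b k * z ^ k) :
    AntitoneOn (fun z : ℝ => (∑' k, a k * z ^ k) / ∑' k, b k * z ^ k) (Ioi 0) := by
  intro x (hx : 0 < x) y (hy : 0 < y) hxy
  have hA (z : ℝ) (hz : 0 < z) k : 0 ≤ a k * z ^ k := mul_nonneg (ha k) (pow_nonneg hz.le k)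
  have hB (z : ℝ) (hz : 0 < z) k : 0 ≤ b k * z ^ k := mul_nonneg (hb k).le (pow_nonneg hz.le k)
  have hBpos (z : ℝ) (hz : 0 < z) : 0 < ∑' k, b k * z ^ k :=
    (hsb z hz).tsum_pos (hB z hz) 0 (by simpa using hb 0)
  have cross_le {k l : ℕ} (hkl : k ≤ l) : a l * b k ≤ a k * b l :=
    (div_le_div_iff₀ (hb l) (hb k)).1 (hab hkl)
  have hsign_of_le {k l : ℕ} (hkl : k ≤ l) :
      (a k * b l - a l * b k) * (y ^ k * x ^ l - x ^ k * y ^ l) ≤ 0 :=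
    mul_nonpos_of_nonneg_of_nonpos (sub_nonneg.2 (cross_le hkl))
      (sub_nonpos.2 (pow_mul_pow_le_pow_mul_pow hx.le hxy hkl))
  -- both factors change sign when `k` and `l` are exchanged
  have hsign (k l : ℕ) : (a k * b l - a l * b k) * (y ^ k * x ^ l - x ^ k * y ^ l) ≤ 0 := by
    rcases le_total k l with hkl | hlk
    · exact hsign_of_le hkl
    · linear_combination hsign_of_le hlk
  have hprod {u v : ℝ} (hu : 0 < u) (hv : 0 < v) :
      Summable fun p : ℕ × ℕ => a p.1 * u ^ p.1 * (b p.2 * v ^ p.2) :=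
    (hsa u hu).mul_of_nonneg (hsb v hv) (hA u hu) (hB v hv)
  show (∑' k, a k * y ^ k) / (∑' k, b k * y ^ k) ≤ (∑' k, a k * x ^ k) / (∑' k, b k * x ^ k)
  rw [div_le_div_iff₀ (hBpos y hy) (hBpos x hx), (hsa y hy).tsum_mul_tsum (hsb x hx) (hprod hy hx),
    (hsa x hx).tsum_mul_tsum (hsb y hy) (hprod hx hy)]
  exact tsum_le_tsum_of_add_swap_le (hprod hy hx) (hprod hx hy)
    fun ⟨k, l⟩ => by simp only [Prod.swap_prod_mk]; linear_combination hsign k l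

theorem series_ratio_antitone (c : ℕ → ℝ) (β β' B : ℝ) (hc : ∀ k, 0 < c k)
    (hβ' : 0 < β') (hββ : β' < β) (hB : 0 ≤ B)
    (hF : ∀ z : ℝ, 0 < z → Summable (fun k : ℕ => c k * z ^ k / Real.Gamma (β + k * B)))
    (hG : ∀ z : ℝ, 0 < z → Summable (fun k : ℕ => c k * z ^ k / Real.Gamma (β' + k * B))) :
    AntitoneOn (fun z : ℝ =>
      (∑' k : ℕ, c k * z ^ k / Real.Gamma (β + k * B)) /
        (∑' k : ℕ, c k * z ^ k / Real.Gamma (β' + k * B))) (Set.Ioi 0) := by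
  have hkB (k : ℕ) : 0 ≤ k * B := mul_nonneg k.cast_nonneg hB
  have hΓ {γ : ℝ} (hγ : 0 < γ) (k : ℕ) : 0 < Gamma (γ + k * B) :=
    Gamma_pos_of_pos (by linarith [hkB k])
  have hratio : Antitone fun k : ℕ => c k / Gamma (β + k * B) / (c k / Gamma (β' + k * B)) := by
    intro k l hkl
    simp only [div_div_div_cancel_left' _ _ (hc _).ne']
    exact antitoneOn_Gamma_add_div_Gamma_add hβ' hββ.le (hkB k) (hkB l)
      (mul_le_mul_of_nonneg_right (Nat.cast_le.2 hkl) hB)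
  simp only [mul_div_right_comm (c _)] at hF hG ⊢
  exact antitoneOn_tsum_mul_pow_div_tsum_mul_pow
    (fun k => (div_pos (hc k) (hΓ (hβ'.trans hββ) k)).le) (fun k => div_pos (hc k) (hΓ hβ' k))
    hratio hF hG
end

section
/- For the two-parametric Mittag-Leffler-type normalization 𝔼_{α,β}(z) = Γ(β)·Σ_{k≥0} z^k/Γ(β + kα), the Turán-type inequality 𝔼_{α,β}(z)·𝔼_{α,β+2}(z) − 𝔼_{α,β+1}(z)² ≥ 0 holds for all z > 0, α ≥ 0, β > 0. -/
/-!
Put `a_k(γ) = Γ(γ) z^k / Γ(γ + kα)` and `x = β + kα ≥ β`. The functional equation of `Γ` gives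
`a_k(β + 1) = (β / x) a_k(β)` and `a_k(β + 2) = (β (β + 1) / (x (x + 1))) a_k(β)`, so
`β / x ≤ (β + 1) / (x + 1)` is the termwise inequality `a_k(β + 1)² ≤ a_k(β) a_k(β + 2)`, and
Cauchy–Schwarz passes it to the sums. For `α > 0` the series converge since
`Γ(x) ≥ T^(x-1) e^(-T)` for all `T ≥ 0`: taking `T^α > |z|` dominates them by a geometric series.
For `α = 0` all three normalized series equal `∑ z^k`.
-/

open Real MeasureTheory Set Filter

lemma rpow_sub_one_mul_exp_neg_le_Gamma {T x : ℝ} (hT : 0 ≤ T) (hx : 1 ≤ x) :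
    T ^ (x - 1) * exp (-T) ≤ Gamma x := by
  have hx0 : 0 < x := by linarith
  have hconv := GammaIntegral_convergent hx0
  rw [Gamma_eq_integral hx0]
  calc T ^ (x - 1) * exp (-T) = ∫ t in Ioi T, T ^ (x - 1) * exp (-t) := by
        rw [integral_const_mul, integral_exp_neg_Ioi]
    _ ≤ ∫ t in Ioi T, exp (-t) * t ^ (x - 1) := by
        refine setIntegral_mono_on ((integrableOn_exp_neg_Ioi T).const_mul _)
          (hconv.mono_set (Ioi_subset_Ioi hT)) measurableSet_Ioi fun t ht => ?_
        have hTt : T ≤ t := le_of_lt ht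
        rw [mul_comm]
        gcongr
    _ ≤ ∫ t in Ioi 0, exp (-t) * t ^ (x - 1) := by
        refine setIntegral_mono_set hconv ?_ (Ioi_subset_Ioi hT).eventuallyLE
        filter_upwards [ae_restrict_mem measurableSet_Ioi] with t (ht : 0 < t)
        positivity

theorem summable_pow_div_Gamma_add_mul {α : ℝ} (hα : 0 < α) (β z : ℝ) :
    Summable fun k : ℕ => z ^ k / Gamma (β + k * α) := by
  obtain ⟨T, hzT, hT⟩ := ((tendsto_rpow_atTop hα).eventually_gt_atTop |z|).and
    (eventually_gt_atTop 0) |>.exists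
  have hTα : 0 < T ^ α := by positivity
  have hgeom : Summable fun k : ℕ => (T ^ (β - 1) * exp (-T))⁻¹ * (|z| / T ^ α) ^ k :=
    (summable_geometric_of_lt_one (by positivity) ((div_lt_one hTα).2 hzT)).mul_left _
  refine hgeom.of_norm_bounded_eventually_nat ?_
  have hlarge : Tendsto (fun k : ℕ => β + k * α) atTop atTop :=
    tendsto_atTop_add_const_left _ _ (tendsto_natCast_atTop_atTop.atTop_mul_const hα)
  filter_upwards [hlarge.eventually_ge_atTop 1] with k hk
  have hΓ := rpow_sub_one_mul_exp_neg_le_Gamma hT.le hk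
  have hpow : T ^ (β + k * α - 1) = T ^ (β - 1) * (T ^ α) ^ k := by
    rw [show β + k * α - 1 = (β - 1) + α * k by ring, rpow_add hT, rpow_mul hT.le, rpow_natCast]
  rw [hpow] at hΓ
  rw [norm_div, norm_pow, Real.norm_eq_abs,
    Real.norm_of_nonneg (Gamma_pos_of_pos (by linarith)).le, div_pow]
  refine (div_le_div_of_nonneg_left (by positivity) (by positivity) hΓ).trans_eq ?_
  field_simp

theorem sq_tsum_le_tsum_mul_tsum_of_sq_le {ι : Type*} {a b c : ι → ℝ} (ha0 : ∀ i, 0 ≤ a i)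
    (hc0 : ∀ i, 0 ≤ c i) (hb : ∀ i, b i ^ 2 ≤ a i * c i) (ha : Summable a) (hc : Summable c) :
    (∑' i, b i) ^ 2 ≤ (∑' i, a i) * ∑' i, c i := by
  have hsqrt : ∀ f : ι → ℝ, (∀ i, 0 ≤ f i) → (fun i => √(f i) ^ (2 : ℝ)) = f := fun f hf => by
    ext i
    rw [rpow_two, sq_sqrt (hf i)]
  obtain ⟨hsum, hholder⟩ := summable_and_inner_le_Lp_mul_Lq_tsum_of_nonneg
    HolderConjugate.two_two (fun i => sqrt_nonneg (a i)) (fun i => sqrt_nonneg (c i))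
    ((hsqrt a ha0).symm ▸ ha) ((hsqrt c hc0).symm ▸ hc)
  rw [hsqrt a ha0, hsqrt c hc0, ← sqrt_eq_rpow, ← sqrt_eq_rpow] at hholder
  have hbound : ∀ i, |b i| ≤ √(a i) * √(c i) := fun i => by
    rw [← sqrt_mul (ha0 i), ← sqrt_sq_eq_abs]
    exact sqrt_le_sqrt (hb i)
  have habs : Summable fun i => |b i| := hsum.of_nonneg_of_le (fun i => abs_nonneg _) hbound
  have hle : |∑' i, b i| ≤ √(∑' i, a i) * √(∑' i, c i) :=
    calc |∑' i, b i| ≤ ∑' i, |b i| := by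
          simpa only [Real.norm_eq_abs] using norm_tsum_le_tsum_norm (f := b) habs
      _ ≤ ∑' i, √(a i) * √(c i) := habs.tsum_le_tsum hbound hsum
      _ ≤ √(∑' i, a i) * √(∑' i, c i) := hholder
  calc (∑' i, b i) ^ 2 = |∑' i, b i| ^ 2 := (sq_abs _).symm
    _ ≤ (√(∑' i, a i) * √(∑' i, c i)) ^ 2 := by gcongr
    _ = (∑' i, a i) * ∑' i, c i := by
        rw [mul_pow, sq_sqrt (tsum_nonneg ha0), sq_sqrt (tsum_nonneg hc0)]

lemma Gamma_add_two {y : ℝ} (hy : 0 < y) : Gamma (y + 2) = (y + 1) * y * Gamma y := by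
  rw [show y + 2 = y + 1 + 1 by ring, Gamma_add_one (by positivity), Gamma_add_one hy.ne',
    mul_assoc]

lemma sq_Gamma_add_one_div_Gamma_add_one_le {β x : ℝ} (hβ : 0 < β) (hβx : β ≤ x) :
    (Gamma (β + 1) / Gamma (x + 1)) ^ 2 ≤
      Gamma β / Gamma x * (Gamma (β + 2) / Gamma (x + 2)) := by
  have hx : 0 < x := hβ.trans_le hβx
  have hfactor : (β / x) ^ 2 ≤ β * (β + 1) / (x * (x + 1)) := by
    rw [div_pow, div_le_div_iff₀ (by positivity) (by positivity)]
    nlinarith [mul_pos hβ hx]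
  calc (Gamma (β + 1) / Gamma (x + 1)) ^ 2 = (Gamma β / Gamma x) ^ 2 * (β / x) ^ 2 := by
        rw [Gamma_add_one hβ.ne', Gamma_add_one hx.ne']
        ring
    _ ≤ (Gamma β / Gamma x) ^ 2 * (β * (β + 1) / (x * (x + 1))) := by gcongr
    _ = Gamma β / Gamma x * (Gamma (β + 2) / Gamma (x + 2)) := by
        rw [Gamma_add_two hβ, Gamma_add_two hx]
        have := (Gamma_pos_of_pos hx).ne'
        field_simp

lemma sq_Gamma_mul_pow_div_Gamma_le {α β : ℝ} (hα : 0 ≤ α) (hβ : 0 < β) (z : ℝ) (k : ℕ) :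
    (Gamma (β + 1) * (z ^ k / Gamma (β + 1 + k * α))) ^ 2 ≤
      Gamma β * (z ^ k / Gamma (β + k * α)) *
        (Gamma (β + 2) * (z ^ k / Gamma (β + 2 + k * α))) := by
  have hratio := sq_Gamma_add_one_div_Gamma_add_one_le hβ (le_add_of_nonneg_right
    (mul_nonneg k.cast_nonneg hα) : β ≤ β + k * α)
  rw [add_right_comm β 1, add_right_comm β 2]
  calc (Gamma (β + 1) * (z ^ k / Gamma (β + k * α + 1))) ^ 2
      = (Gamma (β + 1) / Gamma (β + k * α + 1)) ^ 2 * (z ^ k) ^ 2 := by ring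
    _ ≤ Gamma β / Gamma (β + k * α) * (Gamma (β + 2) / Gamma (β + k * α + 2)) * (z ^ k) ^ 2 :=
        by gcongr
    _ = _ := by ring

theorem mittagLeffler_turan (α β z : ℝ) (hα : 0 ≤ α) (hβ : 0 < β) (hz : 0 < z) :
    0 ≤ (Real.Gamma β * ∑' k : ℕ, z ^ k / Real.Gamma (β + k * α)) *
          (Real.Gamma (β + 2) * ∑' k : ℕ, z ^ k / Real.Gamma (β + 2 + k * α)) -
        (Real.Gamma (β + 1) * ∑' k : ℕ, z ^ k / Real.Gamma (β + 1 + k * α)) ^ 2 := by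
  rw [sub_nonneg, ← tsum_mul_left, ← tsum_mul_left, ← tsum_mul_left]
  rcases hα.eq_or_lt with rfl | hα
  · have hgeometric : ∀ γ > 0, (fun k : ℕ => Gamma γ * (z ^ k / Gamma (γ + k * 0))) =
        fun k => z ^ k := fun γ hγ => by
      ext k
      rw [mul_zero, add_zero, mul_div_cancel₀ _ (Gamma_pos_of_pos hγ).ne']
    rw [hgeometric β hβ, hgeometric (β + 1) (by positivity), hgeometric (β + 2) (by positivity), sq]
  · exact sq_tsum_le_tsum_mul_tsum_of_sq_le (fun k => by positivity) (fun k => by positivity)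
      (sq_Gamma_mul_pow_div_Gamma_le hα.le hβ z)
      ((summable_pow_div_Gamma_add_mul hα β z).mul_left _)
      ((summable_pow_div_Gamma_add_mul hα (β + 2) z).mul_left _)
end

section
/- For the Wright function W_{B,β}(z) = Σ_{k≥0} z^k/(k! Γ(β + kB)) with B ≥ 0, β > 0, the normalized function 𝒲_{B,β}(z) = Γ(β)·W_{B,β}(z) satisfies the Turán-type inequality 𝒲_{B,β}(z)·𝒲_{B,β+2}(z) ≥ 𝒲_{B,β+1}(z)² for all z > 0. -/
/-!
Write `Γ(β) / Γ(β + s)` as `r β`. From `Γ(x + 1) = x Γ(x)` we get `r (β + 1) = β / (β + s) · r β`,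
and since `x ↦ x / (x + s)` is increasing for `s ≥ 0`, `r (β + 1)² ≤ r β · r (β + 2)`. With
`s = k B` this is the Turán inequality for the `k`-th terms of the three normalized series,
and Cauchy–Schwarz passes it to the sums, whose terms are nonnegative for `z > 0`. The series
converge because `Γ ≥ 1/6` on `(0, ∞)`.
-/

open Real

lemma one_le_Gamma_of_two_le {x : ℝ} (hx : 2 ≤ x) : 1 ≤ Gamma x := by
  simpa [Gamma_two] using Gamma_strictMonoOn_Ici.monotoneOn Set.self_mem_Ici hx hx

lemma one_div_six_le_Gamma {x : ℝ} (hx : 0 < x) : 1 / 6 ≤ Gamma x := by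
  rcases le_or_gt 2 x with h | h
  · linarith [one_le_Gamma_of_two_le h]
  · have hGamma_add_two : Gamma (x + 2) = (x + 1) * x * Gamma x := by
      rw [show x + 2 = x + 1 + 1 by ring, Gamma_add_one (by positivity), Gamma_add_one hx.ne']
      ring
    have h1 : 1 ≤ (x + 1) * x * Gamma x := hGamma_add_two ▸ one_le_Gamma_of_two_le (by linarith)
    have h6 : (x + 1) * x ≤ 6 := by nlinarith
    nlinarith [Gamma_pos_of_pos hx]

lemma summable_pow_div_factorial_mul_Gamma (z : ℝ) {x : ℕ → ℝ} (hx : ∀ k, 0 < x k) :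
    Summable fun k : ℕ => z ^ k / ((k.factorial : ℝ) * Gamma (x k)) := by
  refine ((summable_pow_div_factorial |z|).mul_left 6).of_norm_bounded fun k => ?_
  have hG := one_div_six_le_Gamma (hx k)
  rw [norm_div, norm_mul, norm_pow, Real.norm_eq_abs, Real.norm_eq_abs, Real.norm_eq_abs,
    abs_of_pos (Gamma_pos_of_pos (hx k)), Nat.abs_cast, div_le_iff₀ (by positivity)]
  calc |z| ^ k = 6 * (|z| ^ k / k.factorial) * (k.factorial * (1 / 6)) := by field_simp
    _ ≤ 6 * (|z| ^ k / k.factorial) * (k.factorial * Gamma (x k)) := by gcongr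

lemma tsum_sq_le_tsum_mul_tsum_of_sq_le {ι : Type*} {a b c : ι → ℝ} (ha : Summable a)
    (hb : Summable b) (hc : Summable c) (ha0 : ∀ i, 0 ≤ a i) (hb0 : ∀ i, 0 ≤ b i)
    (hc0 : ∀ i, 0 ≤ c i) (h : ∀ i, b i ^ 2 ≤ a i * c i) :
    (∑' i, b i) ^ 2 ≤ (∑' i, a i) * (∑' i, c i) := by
  have hA : 0 ≤ ∑' i, a i := tsum_nonneg ha0
  have hb_le : ∑' i, b i ≤ √(∑' i, a i) * √(∑' i, c i) := by
    refine hb.tsum_le_of_sum_le fun s => ?_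
    calc ∑ i ∈ s, b i ≤ ∑ i ∈ s, √(a i) * √(c i) := by
          refine Finset.sum_le_sum fun i _ => ?_
          rw [← sqrt_mul (ha0 i), ← sqrt_sq (hb0 i)]
          exact sqrt_le_sqrt (h i)
      _ ≤ √(∑ i ∈ s, a i) * √(∑ i ∈ s, c i) := sum_sqrt_mul_sqrt_le s ha0 hc0
      _ ≤ √(∑' i, a i) * √(∑' i, c i) := by
          gcongr
          · exact ha.sum_le_tsum s fun i _ => ha0 i
          · exact hc.sum_le_tsum s fun i _ => hc0 i
  calc (∑' i, b i) ^ 2 ≤ (√(∑' i, a i) * √(∑' i, c i)) ^ 2 := by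
        gcongr
        exact tsum_nonneg hb0
    _ = (∑' i, a i) * (∑' i, c i) := by
        rw [mul_pow, sq_sqrt hA, sq_sqrt (tsum_nonneg hc0)]

lemma Gamma_add_one_div_Gamma_add_one_add {a s : ℝ} (ha : a ≠ 0) (has : a + s ≠ 0) :
    Gamma (a + 1) / Gamma (a + 1 + s) = a / (a + s) * (Gamma a / Gamma (a + s)) := by
  rw [show a + 1 + s = a + s + 1 by ring, Gamma_add_one ha, Gamma_add_one has, mul_div_mul_comm]

lemma sq_Gamma_add_one_div_le {β s : ℝ} (hβ : 0 < β) (hs : 0 ≤ s) :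
    (Gamma (β + 1) / Gamma (β + 1 + s)) ^ 2 ≤
      Gamma β / Gamma (β + s) * (Gamma (β + 2) / Gamma (β + 2 + s)) := by
  have hr0 : 0 ≤ Gamma β / Gamma (β + s) := by
    have := Gamma_pos_of_pos hβ; have := Gamma_pos_of_pos (by linarith : 0 < β + s); positivity
  have hr1 : 0 ≤ Gamma (β + 1) / Gamma (β + 1 + s) := by
    have := Gamma_pos_of_pos (by linarith : 0 < β + 1)
    have := Gamma_pos_of_pos (by linarith : 0 < β + 1 + s); positivity
  have hstep0 := Gamma_add_one_div_Gamma_add_one_add (s := s) hβ.ne' (by linarith)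
  have hstep1 := Gamma_add_one_div_Gamma_add_one_add (a := β + 1) (s := s) (by linarith)
    (by linarith)
  rw [show β + 1 + 1 = β + 2 by ring] at hstep1
  have hmono : β / (β + s) ≤ (β + 1) / (β + 1 + s) := by
    rw [div_le_div_iff₀ (by linarith) (by linarith)]
    nlinarith
  calc (Gamma (β + 1) / Gamma (β + 1 + s)) ^ 2
      = β / (β + s) * (Gamma β / Gamma (β + s) * (Gamma (β + 1) / Gamma (β + 1 + s))) := by
        rw [sq, hstep0]; ring
    _ ≤ (β + 1) / (β + 1 + s) * (Gamma β / Gamma (β + s) * (Gamma (β + 1) / Gamma (β + 1 + s))) :=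
        by gcongr
    _ = Gamma β / Gamma (β + s) * (Gamma (β + 2) / Gamma (β + 2 + s)) := by
        rw [hstep1]; ring

/-- The `k`-th term of the normalized Wright series `Γ(β) W_{B,β}(z)`. -/
noncomputable def wrightTerm (B β z : ℝ) (k : ℕ) : ℝ :=
  Gamma β * (z ^ k / ((k.factorial : ℝ) * Gamma (β + k * B)))

section wrightTerm

variable {B β : ℝ} (hB : 0 ≤ B) (hβ : 0 < β)
include hB hβ

lemma summable_wrightTerm (z : ℝ) : Summable (wrightTerm B β z) :=
  (summable_pow_div_factorial_mul_Gamma z fun k => by positivity).mul_left _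

lemma wrightTerm_nonneg {z : ℝ} (hz : 0 ≤ z) (k : ℕ) : 0 ≤ wrightTerm B β z k := by
  have := Gamma_pos_of_pos hβ
  have := Gamma_pos_of_pos (by positivity : 0 < β + k * B)
  unfold wrightTerm
  positivity

lemma sq_wrightTerm_add_one_le (z : ℝ) (k : ℕ) :
    wrightTerm B (β + 1) z k ^ 2 ≤ wrightTerm B β z k * wrightTerm B (β + 2) z k := by
  have hfactor : ∀ a, wrightTerm B a z k = z ^ k / k.factorial * (Gamma a / Gamma (a + k * B)) :=
    fun a => by unfold wrightTerm; ring
  rw [hfactor, hfactor, hfactor]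
  calc (z ^ k / k.factorial * (Gamma (β + 1) / Gamma (β + 1 + k * B))) ^ 2
      = (z ^ k / k.factorial) ^ 2 * (Gamma (β + 1) / Gamma (β + 1 + k * B)) ^ 2 := by ring
    _ ≤ (z ^ k / k.factorial) ^ 2 *
          (Gamma β / Gamma (β + k * B) * (Gamma (β + 2) / Gamma (β + 2 + k * B))) := by
        gcongr
        exact sq_Gamma_add_one_div_le hβ (by positivity)
    _ = _ := by ring

end wrightTerm

theorem wright_turan (B β z : ℝ) (hB : 0 ≤ B) (hβ : 0 < β) (hz : 0 < z) :
    (Real.Gamma (β + 1) * ∑' k : ℕ, z ^ k / ((k.factorial : ℝ) * Real.Gamma (β + 1 + k * B))) ^ 2 ≤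
      (Real.Gamma β * ∑' k : ℕ, z ^ k / ((k.factorial : ℝ) * Real.Gamma (β + k * B))) *
        (Real.Gamma (β + 2) * ∑' k : ℕ, z ^ k / ((k.factorial : ℝ) * Real.Gamma (β + 2 + k * B))) := by
  have hβ1 : 0 < β + 1 := by linarith
  have hβ2 : 0 < β + 2 := by linarith
  simpa only [wrightTerm, tsum_mul_left] using
    tsum_sq_le_tsum_mul_tsum_of_sq_le (summable_wrightTerm hB hβ z)
      (summable_wrightTerm hB hβ1 z) (summable_wrightTerm hB hβ2 z)
      (wrightTerm_nonneg hB hβ hz.le) (wrightTerm_nonneg hB hβ1 hz.le)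
      (wrightTerm_nonneg hB hβ2 hz.le) (sq_wrightTerm_add_one_le hB hβ z)
end

section
/- Let W_{1,β}(z) = Σ_{k≥0} z^k/(k!·Γ(β + k)). Then W_{1,2}(z)² − W_{1,1}(z)·W_{1,3}(z) ≥ 0 for all z > 0. -/
open Finset Finset.Nat

/-- Vandermonde-based binomial inequality:
`∑ C(n,i)·C(n+2,i) = C(2n+2,n) ≤ C(2n+2,n+1) = ∑ C(n,i)·C(n+2,i+1)`. -/
lemma wts_nat_sum_ineq (n : ℕ) :
    ∑ p ∈ antidiagonal n, n.choose p.1 * (n + 2).choose p.1 ≤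
      ∑ p ∈ antidiagonal n, n.choose p.1 * (n + 2).choose (p.1 + 1) := by
  have h1 : ∑ p ∈ antidiagonal n, n.choose p.1 * (n + 2).choose p.1
      = (n + 2 + n).choose n := by
    rw [Nat.add_choose_eq]
    apply Finset.sum_congr rfl
    intro p hp
    have hp' : p.1 + p.2 = n := mem_antidiagonal.mp hp
    have h2 : n.choose p.1 = n.choose p.2 := by
      rw [← Nat.choose_symm (le_of_add_le_left hp'.le)]
      congr 1; omega
    rw [h2]; ring
  have h2 : ∑ p ∈ antidiagonal n, n.choose p.1 * (n + 2).choose (p.1 + 1)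
      = (n + (n + 2)).choose (n + 1) := by
    rw [Nat.add_choose_eq, Finset.Nat.sum_antidiagonal_succ']
    simp only [Nat.choose_succ_self, zero_mul, zero_add]
    apply Finset.sum_congr rfl
    intro p hp
    have hp' : p.1 + p.2 = n := mem_antidiagonal.mp hp
    congr 1
    rw [← Nat.choose_symm (by omega : p.1 + 1 ≤ n + 2)]
    congr 1; omega
  rw [h1, h2]
  have := Nat.choose_le_middle n (2 * n + 2)
  have hm : (2 * n + 2) / 2 = n + 1 := by omega
  rw [hm] at this
  calc (n + 2 + n).choose n = (2 * n + 2).choose n := by ring_nf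
    _ ≤ (2 * n + 2).choose (n + 1) := this
    _ = (n + (n + 2)).choose (n + 1) := by ring_nf

lemma wts_term_ac (z : ℝ) (i j : ℕ) :
    z ^ i / ((i.factorial : ℝ) * i.factorial) * (z ^ j / ((j.factorial : ℝ) * (j + 2).factorial))
      = (((i + j).choose i * (i + j + 2).choose i : ℕ) : ℝ) *
        (z ^ (i + j) / (((i + j).factorial : ℝ) * ((i + j) + 2).factorial)) := by
  have k1 : (i + j).choose i * i.factorial * j.factorial = (i + j).factorial := by
    simpa using Nat.choose_mul_factorial_mul_factorial (Nat.le_add_right i j)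
  have k2 : (i + j + 2).choose i * i.factorial * (j + 2).factorial = (i + j + 2).factorial := by
    have := Nat.choose_mul_factorial_mul_factorial (by omega : i ≤ i + j + 2)
    rw [show i + j + 2 - i = j + 2 by omega] at this
    exact this
  have c1 : (((i + j).choose i : ℕ) : ℝ) * i.factorial * j.factorial = (i + j).factorial := by
    exact_mod_cast congrArg (Nat.cast : ℕ → ℝ) k1
  have c2 : (((i + j + 2).choose i : ℕ) : ℝ) * i.factorial * (j + 2).factorial
      = (i + j + 2).factorial := by
    exact_mod_cast congrArg (Nat.cast : ℕ → ℝ) k2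
  have h1 : (i.factorial : ℝ) ≠ 0 := Nat.cast_ne_zero.mpr i.factorial_ne_zero
  have h2 : (j.factorial : ℝ) ≠ 0 := Nat.cast_ne_zero.mpr j.factorial_ne_zero
  have h3 : ((j + 2).factorial : ℝ) ≠ 0 := Nat.cast_ne_zero.mpr (j + 2).factorial_ne_zero
  have g1 : (((i + j).choose i : ℕ) : ℝ) ≠ 0 :=
    Nat.cast_ne_zero.mpr (Nat.choose_pos (Nat.le_add_right i j)).ne'
  have g2 : (((i + j + 2).choose i : ℕ) : ℝ) ≠ 0 :=
    Nat.cast_ne_zero.mpr (Nat.choose_pos (by omega : i ≤ i + j + 2)).ne'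
  rw [div_mul_div_comm, ← pow_add, show ((i + j) + 2 : ℕ) = i + j + 2 from rfl, ← c1, ← c2]
  push_cast
  field_simp

lemma wts_term_bb (z : ℝ) (i j : ℕ) :
    z ^ i / ((i.factorial : ℝ) * (i + 1).factorial) *
        (z ^ j / ((j.factorial : ℝ) * (j + 1).factorial))
      = (((i + j).choose i * (i + j + 2).choose (i + 1) : ℕ) : ℝ) *
        (z ^ (i + j) / (((i + j).factorial : ℝ) * ((i + j) + 2).factorial)) := by
  have k1 : (i + j).choose i * i.factorial * j.factorial = (i + j).factorial := by
    simpa using Nat.choose_mul_factorial_mul_factorial (Nat.le_add_right i j)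
  have k2 : (i + j + 2).choose (i + 1) * (i + 1).factorial * (j + 1).factorial
      = (i + j + 2).factorial := by
    have := Nat.choose_mul_factorial_mul_factorial (by omega : i + 1 ≤ i + j + 2)
    rw [show i + j + 2 - (i + 1) = j + 1 by omega] at this
    exact this
  have c1 : (((i + j).choose i : ℕ) : ℝ) * i.factorial * j.factorial = (i + j).factorial := by
    exact_mod_cast congrArg (Nat.cast : ℕ → ℝ) k1
  have c2 : (((i + j + 2).choose (i + 1) : ℕ) : ℝ) * (i + 1).factorial * (j + 1).factorial
      = (i + j + 2).factorial := by
    exact_mod_cast congrArg (Nat.cast : ℕ → ℝ) k2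
  have h1 : (i.factorial : ℝ) ≠ 0 := Nat.cast_ne_zero.mpr i.factorial_ne_zero
  have h2 : (j.factorial : ℝ) ≠ 0 := Nat.cast_ne_zero.mpr j.factorial_ne_zero
  have h3 : ((j + 1).factorial : ℝ) ≠ 0 := Nat.cast_ne_zero.mpr (j + 1).factorial_ne_zero
  have h4 : ((i + 1).factorial : ℝ) ≠ 0 := Nat.cast_ne_zero.mpr (i + 1).factorial_ne_zero
  have g1 : (((i + j).choose i : ℕ) : ℝ) ≠ 0 :=
    Nat.cast_ne_zero.mpr (Nat.choose_pos (Nat.le_add_right i j)).ne'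
  have g2 : (((i + j + 2).choose (i + 1) : ℕ) : ℝ) ≠ 0 :=
    Nat.cast_ne_zero.mpr (Nat.choose_pos (by omega : i + 1 ≤ i + j + 2)).ne'
  rw [div_mul_div_comm, ← pow_add, show ((i + j) + 2 : ℕ) = i + j + 2 from rfl, ← c1, ← c2]
  push_cast
  field_simp

lemma wts_summable (z : ℝ) (hz : 0 ≤ z) (m : ℕ) :
    Summable (fun k : ℕ => z ^ k / ((k.factorial : ℝ) * (k + m).factorial)) := by
  apply Summable.of_nonneg_of_le (fun k => by positivity)
    (fun k => ?_) (Real.summable_pow_div_factorial z)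
  have h1 : (1 : ℝ) ≤ ((k + m).factorial : ℝ) := by
    exact_mod_cast Nat.one_le_iff_ne_zero.mpr (k + m).factorial_ne_zero
  calc z ^ k / ((k.factorial : ℝ) * (k + m).factorial)
      ≤ z ^ k / ((k.factorial : ℝ) * 1) := by
        gcongr
    _ = z ^ k / k.factorial := by rw [mul_one]

lemma wts_summable_norm (z : ℝ) (hz : 0 ≤ z) (m : ℕ) :
    Summable (fun k : ℕ => ‖z ^ k / ((k.factorial : ℝ) * (k + m).factorial)‖) := by
  have h : ∀ k : ℕ, ‖z ^ k / ((k.factorial : ℝ) * (k + m).factorial)‖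
      = z ^ k / ((k.factorial : ℝ) * (k + m).factorial) := fun k => by
    rw [Real.norm_eq_abs, abs_of_nonneg (by positivity)]
  simpa only [h] using wts_summable z hz m

theorem wright_turan_special (z : ℝ) (hz : 0 < z) :
    0 ≤ (∑' k : ℕ, z ^ k / ((k.factorial : ℝ) * Real.Gamma (2 + k))) ^ 2 -
        (∑' k : ℕ, z ^ k / ((k.factorial : ℝ) * Real.Gamma (1 + k))) *
          (∑' k : ℕ, z ^ k / ((k.factorial : ℝ) * Real.Gamma (3 + k))) := by
  have hz' : (0 : ℝ) ≤ z := hz.le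
  have e1 : ∀ k : ℕ, z ^ k / ((k.factorial : ℝ) * Real.Gamma (1 + k))
      = z ^ k / ((k.factorial : ℝ) * (k + 0).factorial) := by
    intro k
    rw [show (1 : ℝ) + k = ((k : ℕ) : ℝ) + 1 by ring,
      Real.Gamma_nat_eq_factorial, Nat.add_zero]
  have e2 : ∀ k : ℕ, z ^ k / ((k.factorial : ℝ) * Real.Gamma (2 + k))
      = z ^ k / ((k.factorial : ℝ) * (k + 1).factorial) := by
    intro k
    rw [show (2 : ℝ) + k = ((k + 1 : ℕ) : ℝ) + 1 by push_cast; ring,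
      Real.Gamma_nat_eq_factorial]
  have e3 : ∀ k : ℕ, z ^ k / ((k.factorial : ℝ) * Real.Gamma (3 + k))
      = z ^ k / ((k.factorial : ℝ) * (k + 2).factorial) := by
    intro k
    rw [show (3 : ℝ) + k = ((k + 2 : ℕ) : ℝ) + 1 by push_cast; ring,
      Real.Gamma_nat_eq_factorial]
  simp only [e1, e2, e3]
  rw [sq,
    tsum_mul_tsum_eq_tsum_sum_antidiagonal_of_summable_norm
      (wts_summable_norm z hz' 1) (wts_summable_norm z hz' 1),
    tsum_mul_tsum_eq_tsum_sum_antidiagonal_of_summable_norm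
      (wts_summable_norm z hz' 0) (wts_summable_norm z hz' 2),
    sub_nonneg]
  refine Summable.tsum_le_tsum (fun n => ?_)
    ((summable_norm_sum_mul_antidiagonal_of_summable_norm
      (wts_summable_norm z hz' 0) (wts_summable_norm z hz' 2)).of_norm)
    ((summable_norm_sum_mul_antidiagonal_of_summable_norm
      (wts_summable_norm z hz' 1) (wts_summable_norm z hz' 1)).of_norm)
  have hL : ∑ p ∈ antidiagonal n,
        z ^ p.1 / ((p.1.factorial : ℝ) * (p.1 + 0).factorial) *
          (z ^ p.2 / ((p.2.factorial : ℝ) * (p.2 + 2).factorial))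
      = ((∑ p ∈ antidiagonal n, n.choose p.1 * (n + 2).choose p.1 : ℕ) : ℝ) *
        (z ^ n / ((n.factorial : ℝ) * (n + 2).factorial)) := by
    rw [Nat.cast_sum, Finset.sum_mul]
    apply Finset.sum_congr rfl
    intro p hp
    have hp' : p.1 + p.2 = n := mem_antidiagonal.mp hp
    rw [Nat.add_zero, wts_term_ac z p.1 p.2, hp']
  have hR : ∑ p ∈ antidiagonal n,
        z ^ p.1 / ((p.1.factorial : ℝ) * (p.1 + 1).factorial) *
          (z ^ p.2 / ((p.2.factorial : ℝ) * (p.2 + 1).factorial))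
      = ((∑ p ∈ antidiagonal n, n.choose p.1 * (n + 2).choose (p.1 + 1) : ℕ) : ℝ) *
        (z ^ n / ((n.factorial : ℝ) * (n + 2).factorial)) := by
    rw [Nat.cast_sum, Finset.sum_mul]
    apply Finset.sum_congr rfl
    intro p hp
    have hp' : p.1 + p.2 = n := mem_antidiagonal.mp hp
    rw [wts_term_bb z p.1 p.2, hp']
  rw [hL, hR]
  exact mul_le_mul_of_nonneg_right (by exact_mod_cast wts_nat_sum_ineq n) (by positivity)
end

section
/- Let α, β₁, β₂ > 0 with α ≥ β₂ and let f(z) = ₁F₂(α; β₁, β₂; z) = Σ_{k≥0} (α)_k z^k / ((β₁)_k (β₂)_k k!). Then for all z > 0, [₁F₂(α; β₁, β₂; z)]^{β₁} ≤ [₁F₂(α; β₁+1, β₂; z)]^{β₁+1}. -/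
/-!
Write `γ = β₁ + 1` and `g x = ₁F₂(α; γ, β₂; x) = ∑ bₖ xᵏ`. Since `(β₁)ₖ (β₁ + k) = β₁ (γ)ₖ`, the
left-hand series equals `g z + z g'(z) / β₁`, and `log (1 + t) ≤ t` reduces the claim to
`z g'(z) ≤ g z log (g z)`. As `log (g 0) = 0`, this follows from the concavity of `log g` on
`[0, ∞)`, i.e. from the Turán-type inequality `g g'' ≤ g'²`.

Write `bₖ = cₖ / k!` with `cₖ = (α)ₖ / ((γ)ₖ (β₂)ₖ)`; the sequence `c` is log-concave because
`α ≥ β₂`. Up to a shift of index, the coefficients of `2 (g g'' - g'²)` are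
`∑_{i+j=M} C(M,i) ((j - i)² - M) cᵢ cⱼ / M!`. The weight `(j - i)² - M` has binomial mean zero
(the variance of `Bin(M, 1/2)` is `M/4`) and increases with `|j - i|`, whereas `cᵢ cⱼ` decreases
with `|j - i|`, so the sum is `≤ 0` by a weighted Chebyshev inequality.
-/

open Finset
open scoped Nat

theorem AntivaryOn.sum_mul_sum_mul_le {ι R : Type*} [CommRing R] [LinearOrder R]
    [IsStrictOrderedRing R] {s : Finset ι} {p f g : ι → R} (hfg : AntivaryOn f g s)
    (hp : ∀ i ∈ s, 0 ≤ p i) :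
    (∑ i ∈ s, p i) * ∑ i ∈ s, p i * (f i * g i) ≤
      (∑ i ∈ s, p i * f i) * ∑ i ∈ s, p i * g i := by
  have hdouble : ∑ i ∈ s, ∑ j ∈ s, p i * p j * ((f j - f i) * (g j - g i)) =
      (∑ i ∈ s, p i) * (∑ j ∈ s, p j * (f j * g j)) +
        (∑ i ∈ s, p i * (f i * g i)) * (∑ j ∈ s, p j) -
        (∑ i ∈ s, p i * g i) * (∑ j ∈ s, p j * f j) -
        (∑ i ∈ s, p i * f i) * (∑ j ∈ s, p j * g j) := by
    simp only [sum_mul_sum, ← sum_add_distrib, ← sum_sub_distrib]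
    exact sum_congr rfl fun i _ => sum_congr rfl fun j _ => by ring
  have hnonpos : ∑ i ∈ s, ∑ j ∈ s, p i * p j * ((f j - f i) * (g j - g i)) ≤ 0 :=
    sum_nonpos fun i hi => sum_nonpos fun j hj =>
      mul_nonpos_of_nonneg_of_nonpos (mul_nonneg (hp i hi) (hp j hj))
        (hfg.sub_mul_sub_nonpos hi hj)
  linarith [mul_comm (∑ i ∈ s, p i * g i) (∑ j ∈ s, p j * f j),
    mul_comm (∑ i ∈ s, p i * (f i * g i)) (∑ j ∈ s, p j)]

theorem sum_antidiagonal_choose (n : ℕ) : ∑ ij ∈ antidiagonal n, (n.choose ij.1 : ℝ) = 2 ^ n := by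
  rw [Nat.sum_antidiagonal_eq_sum_range_succ_mk]
  exact_mod_cast Nat.sum_range_choose n

theorem sum_antidiagonal_choose_mul_sub_sq (n : ℕ) :
    ∑ ij ∈ antidiagonal n, (n.choose ij.1 : ℝ) * ((ij.2 : ℝ) - ij.1) ^ 2 = n * 2 ^ n := by
  induction n with
  | zero => simp
  | succ n ih =>
    rw [sum_antidiagonal_choose_succ_mul (fun i j => ((j : ℝ) - i) ^ 2)]
    have hsymm : ∀ ij ∈ antidiagonal n, (n.choose ij.2 : ℝ) = n.choose ij.1 := fun ij hij => by
      rw [Nat.choose_symm_of_eq_add (mem_antidiagonal.mp hij).symm]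
    calc ∑ ij ∈ antidiagonal n, (n.choose ij.1 : ℝ) * (((ij.2 + 1 : ℕ) : ℝ) - ij.1) ^ 2 +
          ∑ ij ∈ antidiagonal n, (n.choose ij.2 : ℝ) * ((ij.2 : ℝ) - (ij.1 + 1 : ℕ)) ^ 2
        = 2 * ∑ ij ∈ antidiagonal n, (n.choose ij.1 : ℝ) * ((ij.2 : ℝ) - ij.1) ^ 2 +
            2 * ∑ ij ∈ antidiagonal n, (n.choose ij.1 : ℝ) := by
          rw [mul_sum, mul_sum, ← sum_add_distrib, ← sum_add_distrib]
          exact sum_congr rfl fun ij hij => by rw [hsymm ij hij]; push_cast; ring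
      _ = (n + 1 : ℕ) * 2 ^ (n + 1) := by
          rw [ih, sum_antidiagonal_choose]; push_cast; ring

def derivCoeff (a : ℕ → ℝ) (n : ℕ) : ℝ := (n + 1) * a (n + 1)

theorem sum_antidiagonal_add_two_sq_sub_mul (b : ℕ → ℝ) (N : ℕ) :
    ∑ ij ∈ antidiagonal (N + 2), (((ij.2 : ℝ) - ij.1) ^ 2 - (N + 2 : ℕ)) * (b ij.1 * b ij.2) =
      2 * (∑ ij ∈ antidiagonal N, b ij.1 * derivCoeff (derivCoeff b) ij.2 -
        ∑ ij ∈ antidiagonal N, derivCoeff b ij.1 * derivCoeff b ij.2) := by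
  have hsplit : ∀ ij ∈ antidiagonal (N + 2),
      (((ij.2 : ℝ) - ij.1) ^ 2 - (N + 2 : ℕ)) * (b ij.1 * b ij.2) =
        ((ij.2 : ℝ) * (ij.2 - 1) * (b ij.1 * b ij.2) - ij.1 * ij.2 * (b ij.1 * b ij.2)) +
        ((ij.1 : ℝ) * (ij.1 - 1) * (b ij.1 * b ij.2) - ij.1 * ij.2 * (b ij.1 * b ij.2)) := by
    intro ij hij
    rw [← mem_antidiagonal.mp hij]
    push_cast
    ring
  have hswap : ∑ ij ∈ antidiagonal (N + 2),
      ((ij.1 : ℝ) * (ij.1 - 1) * (b ij.1 * b ij.2) - ij.1 * ij.2 * (b ij.1 * b ij.2)) =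
      ∑ ij ∈ antidiagonal (N + 2),
        ((ij.2 : ℝ) * (ij.2 - 1) * (b ij.1 * b ij.2) - ij.1 * ij.2 * (b ij.1 * b ij.2)) := by
    rw [← Nat.sum_antidiagonal_swap]
    exact sum_congr rfl fun ij _ => by simp only [Prod.fst_swap, Prod.snd_swap]; ring
  have hdiag : ∑ ij ∈ antidiagonal (N + 2), (ij.2 : ℝ) * (ij.2 - 1) * (b ij.1 * b ij.2) =
      ∑ ij ∈ antidiagonal N, b ij.1 * derivCoeff (derivCoeff b) ij.2 := by
    rw [Nat.sum_antidiagonal_succ', Nat.sum_antidiagonal_succ']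
    simp only [derivCoeff]
    push_cast
    simp only [zero_mul, zero_add, sub_self, mul_zero]
    exact sum_congr rfl fun ij _ => by ring
  have hcross : ∑ ij ∈ antidiagonal (N + 2), (ij.1 : ℝ) * ij.2 * (b ij.1 * b ij.2) =
      ∑ ij ∈ antidiagonal N, derivCoeff b ij.1 * derivCoeff b ij.2 := by
    rw [Nat.sum_antidiagonal_succ, Nat.sum_antidiagonal_succ']
    simp only [derivCoeff]
    push_cast
    simp only [zero_mul, mul_zero, zero_add]
    exact sum_congr rfl fun ij _ => by ring
  rw [sum_congr rfl hsplit, sum_add_distrib, hswap, sum_sub_distrib, hdiag, hcross]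
  ring

section LogConcave

-- `hc` says that `c (n + 1) / c n` is non-increasing, written without division.
variable {c : ℕ → ℝ} (hc : ∀ m n, m ≤ n → c m * c (n + 1) ≤ c (m + 1) * c n)
include hc

theorem mul_le_mul_of_add_le_add_one :
    ∀ k m n, m + k ≤ n + 1 → c m * c (n + k) ≤ c (m + k) * c n
  | 0, _, _, _ => le_rfl
  | k + 1, m, n, h =>
    calc c m * c (n + k + 1) ≤ c (m + 1) * c (n + k) := hc m (n + k) (by omega)
      _ ≤ c (m + 1 + k) * c n := mul_le_mul_of_add_le_add_one k (m + 1) n (by omega)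
      _ = c (m + (k + 1)) * c n := by rw [add_assoc, add_comm 1 k]

theorem mul_le_mul_of_sq_sub_le {i j i' j' : ℕ} (hsum : i + j = i' + j')
    (hsq : ((j : ℝ) - i) ^ 2 ≤ ((j' : ℝ) - i') ^ 2) : c i' * c j' ≤ c i * c j := by
  wlog hij : i ≤ j generalizing i j
  · rw [mul_comm (c i)]
    exact this (by omega) (by rwa [← neg_sub, neg_sq]) (by omega)
  wlog hij' : i' ≤ j' generalizing i' j'
  · rw [mul_comm (c i')]
    exact this (by omega) (by rwa [← neg_sub (j' : ℝ), neg_sq]) (by omega)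
  have hdist : (j : ℝ) - i ≤ j' - i' :=
    (pow_le_pow_iff_left₀ (sub_nonneg.2 (Nat.cast_le.2 hij)) (sub_nonneg.2 (Nat.cast_le.2 hij'))
      two_ne_zero).mp hsq
  have hle : j + i' ≤ j' + i := by exact_mod_cast (by linarith : (j : ℝ) + i' ≤ j' + i)
  obtain ⟨k, rfl⟩ : ∃ k, i = i' + k := ⟨i - i', by omega⟩
  obtain rfl : j' = j + k := by omega
  exact mul_le_mul_of_add_le_add_one hc k i' j (by omega)

theorem sum_antidiagonal_sq_sub_mul_nonpos (M : ℕ) :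
    ∑ ij ∈ antidiagonal M, (((ij.2 : ℝ) - ij.1) ^ 2 - M) * (c ij.1 / ij.1 ! * (c ij.2 / ij.2 !))
      ≤ 0 := by
  set w : ℕ × ℕ → ℝ := fun ij => ((ij.2 : ℝ) - ij.1) ^ 2 - M
  set p : ℕ × ℕ → ℝ := fun ij => (M.choose ij.1 : ℝ)
  set D : ℕ × ℕ → ℝ := fun ij => c ij.1 * c ij.2
  have hterm : ∀ ij ∈ antidiagonal M,
      w ij * (c ij.1 / ij.1 ! * (c ij.2 / ij.2 !)) = p ij * (D ij * w ij) / M ! := by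
    rintro ⟨i, j⟩ hij
    obtain rfl := mem_antidiagonal.mp hij
    have hfac : ((i + j).choose i : ℝ) * i ! * j ! = (i + j)! := by
      exact_mod_cast Nat.choose_symm_add (a := i) ▸ Nat.add_choose_mul_factorial_mul_factorial i j
    field_simp
    rw [← hfac]
    ring
  have hanti : AntivaryOn D w (antidiagonal M) := fun x hx y hy hxy =>
    mul_le_mul_of_sq_sub_le hc ((mem_antidiagonal.mp hx).trans (mem_antidiagonal.mp hy).symm)
      (by simp only [w] at hxy; linarith)
  have hmean : ∑ ij ∈ antidiagonal M, p ij * w ij = 0 := by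
    simp only [p, w, mul_sub, sum_sub_distrib, sum_antidiagonal_choose_mul_sub_sq,
      ← sum_mul, sum_antidiagonal_choose]
    ring
  have hcheb := hanti.sum_mul_sum_mul_le (p := p) fun ij _ => Nat.cast_nonneg _
  rw [hmean, mul_zero, sum_antidiagonal_choose] at hcheb
  rw [sum_congr rfl hterm, ← sum_div]
  exact div_nonpos_of_nonpos_of_nonneg (nonpos_of_mul_nonpos_right hcheb (by positivity))
    (by positivity)

theorem sum_antidiagonal_mul_derivCoeff_derivCoeff_le (N : ℕ) :
    ∑ ij ∈ antidiagonal N, c ij.1 / ij.1 ! * derivCoeff (derivCoeff fun k => c k / k !) ij.2 ≤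
      ∑ ij ∈ antidiagonal N,
        derivCoeff (fun k => c k / k !) ij.1 * derivCoeff (fun k => c k / k !) ij.2 := by
  have hsymm := sum_antidiagonal_add_two_sq_sub_mul (fun k => c k / k !) N
  have hnonpos := sum_antidiagonal_sq_sub_mul_nonpos hc (N + 2)
  linarith

end LogConcave

noncomputable def evalSeries (a : ℕ → ℝ) (x : ℝ) : ℝ := ∑' n, a n * x ^ n

section PowerSeries

variable {a : ℕ → ℝ}

theorem evalSeries_zero (a : ℕ → ℝ) : evalSeries a 0 = a 0 := by
  rw [evalSeries, tsum_eq_single 0 fun n hn => by rw [zero_pow hn, mul_zero], pow_zero, mul_one]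

theorem evalSeries_nonneg (ha : ∀ n, 0 ≤ a n) {x : ℝ} (hx : 0 ≤ x) : 0 ≤ evalSeries a x :=
  tsum_nonneg fun n => mul_nonneg (ha n) (pow_nonneg hx n)

theorem le_evalSeries (ha : ∀ n, 0 ≤ a n) {x : ℝ} (hx : 0 ≤ x)
    (hsum : Summable fun n => a n * x ^ n) : a 0 ≤ evalSeries a x := by
  simpa [evalSeries] using hsum.le_tsum 0 fun n _ => mul_nonneg (ha n) (pow_nonneg hx n)

theorem hasSum_natCast_mul_mul_pow {x : ℝ} (hsum : Summable fun n => derivCoeff a n * x ^ n) :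
    HasSum (fun n : ℕ => n * a n * x ^ n) (x * evalSeries (derivCoeff a) x) := by
  rw [← hasSum_nat_add_iff' 1]
  simp only [range_one, sum_singleton, CharP.cast_eq_zero, zero_mul, sub_zero]
  refine (hsum.hasSum.mul_left x).congr_fun fun n => ?_
  simp only [derivCoeff]
  push_cast
  ring

theorem evalSeries_mul_le_of_sum_antidiagonal_le {b c d : ℕ → ℝ} {x : ℝ} (hx : 0 ≤ x)
    (ha : Summable fun n => ‖a n * x ^ n‖) (hb : Summable fun n => ‖b n * x ^ n‖)
    (hc : Summable fun n => ‖c n * x ^ n‖) (hd : Summable fun n => ‖d n * x ^ n‖)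
    (hcoeff : ∀ N,
      ∑ ij ∈ antidiagonal N, a ij.1 * b ij.2 ≤ ∑ ij ∈ antidiagonal N, c ij.1 * d ij.2) :
    evalSeries a x * evalSeries b x ≤ evalSeries c x * evalSeries d x := by
  have hcauchy : ∀ (e f : ℕ → ℝ) (N : ℕ),
      ∑ ij ∈ antidiagonal N, e ij.1 * x ^ ij.1 * (f ij.2 * x ^ ij.2) =
      (∑ ij ∈ antidiagonal N, e ij.1 * f ij.2) * x ^ N := fun e f N => by
    rw [sum_mul]
    exact sum_congr rfl fun ij hij => by rw [← mem_antidiagonal.mp hij, pow_add]; ring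
  rw [evalSeries, evalSeries, evalSeries, evalSeries,
    tsum_mul_tsum_eq_tsum_sum_antidiagonal_of_summable_norm ha hb,
    tsum_mul_tsum_eq_tsum_sum_antidiagonal_of_summable_norm hc hd]
  refine Summable.tsum_le_tsum (fun N => ?_)
    (summable_norm_sum_mul_antidiagonal_of_summable_norm ha hb).of_norm
    (summable_norm_sum_mul_antidiagonal_of_summable_norm hc hd).of_norm
  rw [hcauchy, hcauchy]
  exact mul_le_mul_of_nonneg_right (hcoeff N) (pow_nonneg hx N)

variable {C R : ℝ} (ha : ∀ n, |a n| ≤ C * R ^ n / n !)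
include ha

theorem summable_norm_mul_pow_of_abs_le (x : ℝ) : Summable fun n => ‖a n * x ^ n‖ := by
  refine .of_nonneg_of_le (fun n => norm_nonneg _) (fun n => ?_)
    ((Real.summable_pow_div_factorial (R * |x|)).mul_left C)
  rw [norm_mul, norm_pow, Real.norm_eq_abs, Real.norm_eq_abs, mul_pow]
  calc |a n| * |x| ^ n ≤ C * R ^ n / n ! * |x| ^ n := by gcongr; exact ha n
    _ = C * (R ^ n * |x| ^ n / n !) := by ring

theorem abs_derivCoeff_le (n : ℕ) : |derivCoeff a n| ≤ C * R * R ^ n / n ! := by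
  rw [derivCoeff, abs_mul, abs_of_nonneg (by positivity)]
  calc ((n : ℝ) + 1) * |a (n + 1)| ≤ (n + 1) * (C * R ^ (n + 1) / (n + 1)!) := by
        gcongr; exact ha _
    _ = C * R * R ^ n / n ! := by
        rw [Nat.factorial_succ]; push_cast; field_simp; ring

theorem hasDerivAt_evalSeries (x : ℝ) :
    HasDerivAt (evalSeries a) (evalSeries (derivCoeff a) x) x := by
  set ρ := |x| + 1
  have hρ : 0 ≤ ρ := by positivity
  have hx : x ∈ Set.Ioo (-ρ) ρ := abs_lt.mp (lt_add_one _)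
  have hderiv : Summable fun n => ‖derivCoeff a n * ρ ^ n‖ :=
    summable_norm_mul_pow_of_abs_le (abs_derivCoeff_le ha) ρ
  have hu : Summable fun n => |a n| * (n * ρ ^ (n - 1)) := by
    refine (summable_nat_add_iff 1).mp (hderiv.congr fun n => ?_)
    simp only [derivCoeff, norm_mul, norm_pow, Real.norm_eq_abs, abs_of_nonneg hρ,
      Nat.add_sub_cancel, abs_of_nonneg (by positivity : (0 : ℝ) ≤ n + 1)]
    push_cast
    ring
  have hbound : ∀ n y, y ∈ Set.Ioo (-ρ) ρ →
      ‖a n * (n * y ^ (n - 1))‖ ≤ |a n| * (n * ρ ^ (n - 1)) := by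
    intro n y hy
    rw [norm_mul, norm_mul, norm_pow, Real.norm_eq_abs, Real.norm_eq_abs, Real.norm_eq_abs,
      Nat.abs_cast]
    gcongr
    exact abs_lt.mpr hy |>.le
  have H := hasDerivAt_tsum_of_isPreconnected hu isOpen_Ioo isPreconnected_Ioo
    (fun n y _ => (hasDerivAt_pow n y).const_mul (a n)) hbound hx
    (summable_norm_mul_pow_of_abs_le ha x).of_norm hx
  have hval : ∑' n, a n * (n * x ^ (n - 1)) = evalSeries (derivCoeff a) x := by
    rw [tsum_eq_zero_add' ?_]
    · simp only [CharP.cast_eq_zero, zero_mul, mul_zero, zero_add, evalSeries, derivCoeff,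
        Nat.add_sub_cancel]
      exact tsum_congr fun n => by push_cast; ring
    · refine (summable_norm_mul_pow_of_abs_le (abs_derivCoeff_le ha) x).of_norm.congr fun n => ?_
      simp only [derivCoeff, Nat.add_sub_cancel]; push_cast; ring
  rw [← hval]
  exact H

end PowerSeries

theorem mul_deriv_le_mul_log_sub_log {g g' g'' : ℝ → ℝ} {z : ℝ} (hz : 0 ≤ z)
    (hg : ∀ x, HasDerivAt g (g' x) x) (hg' : ∀ x, HasDerivAt g' (g'' x) x)
    (hpos : ∀ x, 0 ≤ x → 0 < g x) (hturan : ∀ x, 0 ≤ x → g x * g'' x ≤ g' x ^ 2) :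
    z * g' z ≤ g z * (Real.log (g z) - Real.log (g 0)) := by
  have hlog : ∀ x, 0 ≤ x → HasDerivAt (fun y => Real.log (g y)) (g' x / g x) x :=
    fun x hx => (hg x).log (hpos x hx).ne'
  have hquot : ∀ x, 0 ≤ x → HasDerivAt (fun y => g' y / g y)
      ((g'' x * g x - g' x * g' x) / g x ^ 2) x :=
    fun x hx => (hg' x).div (hg x) (hpos x hx).ne'
  have hanti : AntitoneOn (fun y => g' y / g y) (Set.Ici 0) := by
    refine antitoneOn_of_deriv_nonpos (convex_Ici 0)
      (fun x hx => (hquot x hx).continuousAt.continuousWithinAt)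
      (fun x hx => (hquot x (interior_subset hx)).differentiableAt.differentiableWithinAt)
      fun x hx => ?_
    rw [interior_Ici] at hx
    rw [(hquot x (le_of_lt hx)).deriv]
    exact div_nonpos_of_nonpos_of_nonneg (by nlinarith [hturan x hx.le]) (sq_nonneg _)
  have hslope := (convex_Icc 0 z).mul_sub_le_image_sub_of_le_deriv (C := g' z / g z)
    (f := fun y => Real.log (g y))
    (fun x hx => (hlog x hx.1).continuousAt.continuousWithinAt)
    (fun x hx => (hlog x (interior_subset hx).1).differentiableAt.differentiableWithinAt)
    (fun x hx => by
      rw [interior_Icc] at hx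
      rw [(hlog x hx.1.le).deriv]
      exact hanti hx.1.le hz hx.2.le)
    0 ⟨le_rfl, hz⟩ z ⟨hz, le_rfl⟩ hz
  have hgz := hpos z hz
  rw [sub_zero, div_mul_eq_mul_div, div_le_iff₀ hgz] at hslope
  linarith

theorem add_div_rpow_le_rpow_add_one {g t β : ℝ} (hg : 0 < g) (hβ : 0 < β) (ht : 0 ≤ t)
    (h : t ≤ g * Real.log g) : (g + t / β) ^ β ≤ g ^ (β + 1) := by
  have hsum : 0 < g + t / β := by positivity
  have hratio : Real.log (g + t / β) - Real.log g ≤ t / β / g := by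
    rw [← Real.log_div hsum.ne' hg.ne']
    calc Real.log ((g + t / β) / g) ≤ (g + t / β) / g - 1 :=
          Real.log_le_sub_one_of_pos (by positivity)
      _ = t / β / g := by field_simp; ring
  have hlog : β * Real.log (g + t / β) ≤ (β + 1) * Real.log g := by
    have hquot : t / β / g ≤ Real.log g / β := by
      rw [div_div, div_le_div_iff₀ (by positivity) hβ]; nlinarith
    have := mul_le_mul_of_nonneg_left (hratio.trans hquot) hβ.le
    rw [mul_div_cancel₀ _ hβ.ne'] at this
    linarith
  rw [Real.rpow_def_of_pos hsum, Real.rpow_def_of_pos hg, Real.exp_le_exp, mul_comm,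
    mul_comm (Real.log g)]
  exact hlog

noncomputable def pochRatio (α β₁ β₂ : ℝ) (k : ℕ) : ℝ :=
  (∏ i ∈ range k, (α + i)) / ((∏ i ∈ range k, (β₁ + i)) * ∏ i ∈ range k, (β₂ + i))

noncomputable def hyp1F2Coeff (α β₁ β₂ : ℝ) (k : ℕ) : ℝ := pochRatio α β₁ β₂ k / k !

section Hypergeometric

variable {α β₁ β₂ : ℝ}

theorem pochRatio_zero : pochRatio α β₁ β₂ 0 = 1 := by simp [pochRatio]

theorem hyp1F2Coeff_zero : hyp1F2Coeff α β₁ β₂ 0 = 1 := by simp [hyp1F2Coeff, pochRatio_zero]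

theorem pochRatio_succ (k : ℕ) :
    pochRatio α β₁ β₂ (k + 1) = pochRatio α β₁ β₂ k * ((α + k) / ((β₁ + k) * (β₂ + k))) := by
  rw [pochRatio, pochRatio, prod_range_succ, prod_range_succ, prod_range_succ, div_mul_div_comm]
  ring

theorem pochRatio_eq_one_add_div_mul (hβ₁ : 0 < β₁) (hβ₂ : 0 < β₂) (k : ℕ) :
    pochRatio α β₁ β₂ k = (1 + k / β₁) * pochRatio α (β₁ + 1) β₂ k := by
  have hshift : (∏ i ∈ range k, (β₁ + i)) * (β₁ + k) = β₁ * ∏ i ∈ range k, (β₁ + 1 + i) := by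
    rw [← prod_range_succ (fun i : ℕ => β₁ + i), prod_range_succ', mul_comm]
    simp only [Nat.cast_zero, add_zero, Nat.cast_succ, add_assoc, add_comm (1 : ℝ)]
  have : 0 < ∏ i ∈ range k, (β₁ + i) := prod_pos fun i _ => by positivity
  have : 0 < ∏ i ∈ range k, (β₁ + 1 + i) := prod_pos fun i _ => by positivity
  have : 0 < ∏ i ∈ range k, (β₂ + i) := prod_pos fun i _ => by positivity
  rw [pochRatio, pochRatio]
  field_simp
  linear_combination -(∏ i ∈ range k, (α + i)) * hshift

variable (hβ₂ : 0 < β₂) (hαβ : β₂ ≤ α)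
include hβ₂ hαβ

theorem pochRatio_nonneg (hβ₁ : 0 < β₁) (k : ℕ) : 0 ≤ pochRatio α β₁ β₂ k := by
  have hα : 0 < α := hβ₂.trans_le hαβ
  unfold pochRatio
  positivity

theorem pochRatio_mul_succ_le (hβ₁ : 0 < β₁) {m n : ℕ} (hmn : m ≤ n) :
    pochRatio α β₁ β₂ m * pochRatio α β₁ β₂ (n + 1) ≤
      pochRatio α β₁ β₂ (m + 1) * pochRatio α β₁ β₂ n := by
  have hratio : (α + n) / ((β₁ + n) * (β₂ + n)) ≤ (α + m) / ((β₁ + m) * (β₂ + m)) := by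
    have hmn' : (m : ℝ) ≤ n := Nat.cast_le.mpr hmn
    have hm : (0 : ℝ) ≤ m := Nat.cast_nonneg m
    rw [div_le_div_iff₀ (by positivity) (by positivity)]
    have hd : (0 : ℝ) ≤ n - m := sub_nonneg.2 hmn'
    have hA : 0 ≤ α + m := by linarith
    have hB : 0 ≤ β₁ + m := by linarith
    have hC : 0 ≤ β₂ + m := by linarith
    nlinarith [mul_nonneg (mul_nonneg hd hB) (sub_nonneg.2 hαβ), mul_nonneg (mul_nonneg hd hA) hC,
      mul_nonneg (mul_nonneg hd hd) hA]
  rw [pochRatio_succ, pochRatio_succ]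
  have := mul_nonneg (pochRatio_nonneg hβ₂ hαβ hβ₁ m) (pochRatio_nonneg hβ₂ hαβ hβ₁ n)
  nlinarith [mul_le_mul_of_nonneg_left hratio this]

theorem pochRatio_le_pow (hβ₁ : 1 ≤ β₁) (k : ℕ) : pochRatio α β₁ β₂ k ≤ (α / β₂) ^ k := by
  induction k with
  | zero => simp [pochRatio_zero]
  | succ k ih =>
    have hα : 0 < α := hβ₂.trans_le hαβ
    have hk : (0 : ℝ) ≤ k := Nat.cast_nonneg k
    have hβ₁k : 0 < β₁ + k := by linarith
    have hratio : (α + k) / ((β₁ + k) * (β₂ + k)) ≤ α / β₂ := by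
      rw [div_le_div_iff₀ (by positivity) hβ₂]
      calc (α + k) * β₂ ≤ α * (β₂ + k) := by nlinarith
        _ ≤ α * ((β₁ + k) * (β₂ + k)) :=
          mul_le_mul_of_nonneg_left (le_mul_of_one_le_left (by positivity) (by linarith)) hα.le
    rw [pochRatio_succ, pow_succ]
    exact mul_le_mul ih hratio (by positivity) (by positivity)

end Hypergeometric

section HypergeometricSeries

variable {α γ β₂ : ℝ} (hγ : 1 ≤ γ) (hβ₂ : 0 < β₂) (hαβ : β₂ ≤ α)
include hγ hβ₂ hαβ

theorem hyp1F2Coeff_nonneg (k : ℕ) : 0 ≤ hyp1F2Coeff α γ β₂ k :=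
  div_nonneg (pochRatio_nonneg hβ₂ hαβ (by linarith) k) (Nat.cast_nonneg _)

theorem abs_hyp1F2Coeff_le (k : ℕ) : |hyp1F2Coeff α γ β₂ k| ≤ 1 * (α / β₂) ^ k / k ! := by
  rw [one_mul, abs_of_nonneg (hyp1F2Coeff_nonneg hγ hβ₂ hαβ k), hyp1F2Coeff]
  gcongr
  exact pochRatio_le_pow hβ₂ hαβ hγ k

theorem one_le_evalSeries_hyp1F2Coeff {x : ℝ} (hx : 0 ≤ x) :
    1 ≤ evalSeries (hyp1F2Coeff α γ β₂) x :=
  hyp1F2Coeff_zero (α := α) ▸ le_evalSeries (hyp1F2Coeff_nonneg hγ hβ₂ hαβ) hx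
    (summable_norm_mul_pow_of_abs_le (abs_hyp1F2Coeff_le hγ hβ₂ hαβ) x).of_norm

theorem evalSeries_hyp1F2Coeff_mul_le {x : ℝ} (hx : 0 ≤ x) :
    evalSeries (hyp1F2Coeff α γ β₂) x * evalSeries (derivCoeff (derivCoeff (hyp1F2Coeff α γ β₂))) x
      ≤ evalSeries (derivCoeff (hyp1F2Coeff α γ β₂)) x ^ 2 := by
  have hb := abs_hyp1F2Coeff_le hγ hβ₂ hαβ
  have hb' := summable_norm_mul_pow_of_abs_le (abs_derivCoeff_le hb) x
  rw [sq]
  exact evalSeries_mul_le_of_sum_antidiagonal_le hx (summable_norm_mul_pow_of_abs_le hb x)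
    (summable_norm_mul_pow_of_abs_le (abs_derivCoeff_le (abs_derivCoeff_le hb)) x) hb' hb'
    (sum_antidiagonal_mul_derivCoeff_derivCoeff_le
      fun m n hmn => pochRatio_mul_succ_le hβ₂ hαβ (by linarith) hmn)

theorem mul_deriv_le_mul_log_hyp1F2 {z : ℝ} (hz : 0 ≤ z) :
    z * evalSeries (derivCoeff (hyp1F2Coeff α γ β₂)) z ≤
      evalSeries (hyp1F2Coeff α γ β₂) z * Real.log (evalSeries (hyp1F2Coeff α γ β₂) z) := by
  have hb := abs_hyp1F2Coeff_le hγ hβ₂ hαβ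
  have h := mul_deriv_le_mul_log_sub_log hz (hasDerivAt_evalSeries hb)
    (hasDerivAt_evalSeries (abs_derivCoeff_le hb))
    (fun x hx => one_pos.trans_le (one_le_evalSeries_hyp1F2Coeff hγ hβ₂ hαβ hx))
    (fun x hx => evalSeries_hyp1F2Coeff_mul_le hγ hβ₂ hαβ hx)
  rwa [evalSeries_zero, hyp1F2Coeff_zero, Real.log_one, sub_zero] at h

end HypergeometricSeries

theorem evalSeries_hyp1F2Coeff_eq {α β₁ β₂ : ℝ} (hβ₁ : 0 < β₁) (hβ₂ : 0 < β₂) (hαβ : β₂ ≤ α)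
    (z : ℝ) : evalSeries (hyp1F2Coeff α β₁ β₂) z =
      evalSeries (hyp1F2Coeff α (β₁ + 1) β₂) z +
        z * evalSeries (derivCoeff (hyp1F2Coeff α (β₁ + 1) β₂)) z / β₁ := by
  have hb := abs_hyp1F2Coeff_le (γ := β₁ + 1) (by linarith) hβ₂ hαβ
  have hterm : ∀ k : ℕ, hyp1F2Coeff α β₁ β₂ k * z ^ k = hyp1F2Coeff α (β₁ + 1) β₂ k * z ^ k +
      k * hyp1F2Coeff α (β₁ + 1) β₂ k * z ^ k / β₁ := fun k => by
    rw [hyp1F2Coeff, hyp1F2Coeff, pochRatio_eq_one_add_div_mul hβ₁ hβ₂]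
    field_simp
  have hg := (summable_norm_mul_pow_of_abs_le hb z).of_norm.hasSum
  have hθg := hasSum_natCast_mul_mul_pow
    (summable_norm_mul_pow_of_abs_le (abs_derivCoeff_le hb) z).of_norm
  rw [evalSeries, tsum_congr hterm]
  exact (hg.add (hθg.div_const β₁)).tsum_eq

theorem lazarevic_1F2_general (α β₁ β₂ : ℝ) (hβ₁ : 0 < β₁) (hβ₂ : 0 < β₂)
    (hαβ : β₂ ≤ α) (z : ℝ) (hz : 0 < z) :
    (∑' k : ℕ, (∏ i ∈ Finset.range k, (α + i)) * z ^ k /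
        ((∏ i ∈ Finset.range k, (β₁ + i)) * (∏ i ∈ Finset.range k, (β₂ + i)) *
          (k.factorial : ℝ))) ^ β₁ ≤
      (∑' k : ℕ, (∏ i ∈ Finset.range k, (α + i)) * z ^ k /
        ((∏ i ∈ Finset.range k, (β₁ + 1 + i)) * (∏ i ∈ Finset.range k, (β₂ + i)) *
          (k.factorial : ℝ))) ^ (β₁ + 1) := by
  have hseries : ∀ β : ℝ, (∑' k : ℕ, (∏ i ∈ Finset.range k, (α + i)) * z ^ k /
      ((∏ i ∈ Finset.range k, (β + i)) * (∏ i ∈ Finset.range k, (β₂ + i)) * (k.factorial : ℝ))) =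
        evalSeries (hyp1F2Coeff α β β₂) z := fun β =>
    tsum_congr fun k => by rw [hyp1F2Coeff, pochRatio, div_div, div_mul_eq_mul_div]
  have hγ : (1 : ℝ) ≤ β₁ + 1 := by linarith
  rw [hseries, hseries, evalSeries_hyp1F2Coeff_eq hβ₁ hβ₂ hαβ]
  exact add_div_rpow_le_rpow_add_one
    (one_pos.trans_le (one_le_evalSeries_hyp1F2Coeff hγ hβ₂ hαβ hz.le)) hβ₁
    (mul_nonneg hz.le (evalSeries_nonneg (fun n => mul_nonneg (by positivity)
      (hyp1F2Coeff_nonneg hγ hβ₂ hαβ (n + 1))) hz.le))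
    (mul_deriv_le_mul_log_hyp1F2 hγ hβ₂ hαβ hz.le)

theorem lazarevic_1F2 (α β₁ β₂ : ℝ) (hα : 0 < α) (hβ₁ : 0 < β₁) (hβ₂ : 0 < β₂)
    (hαβ : β₂ ≤ α) (z : ℝ) (hz : 0 < z) :
    (∑' k : ℕ, (∏ i ∈ Finset.range k, (α + i)) * z ^ k /
        ((∏ i ∈ Finset.range k, (β₁ + i)) * (∏ i ∈ Finset.range k, (β₂ + i)) *
          (k.factorial : ℝ))) ^ β₁ ≤
      (∑' k : ℕ, (∏ i ∈ Finset.range k, (α + i)) * z ^ k /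
        ((∏ i ∈ Finset.range k, (β₁ + 1 + i)) * (∏ i ∈ Finset.range k, (β₂ + i)) *
          (k.factorial : ℝ))) ^ (β₁ + 1) :=
  lazarevic_1F2_general α β₁ β₂ hβ₁ hβ₂ hαβ z hz
end

section
/- Let α_1,…,α_p, β_1,…,β_{p+1} > 0 with α_i ≥ β_{i+1} for i = 1,…,p. Then the function z ↦ ₚF_{p+1}(α_1,…,α_p; β_1,…,β_{p+1}; z) is log-concave on (0, ∞), and satisfies ₚF_{p+1}(z) ≤ exp((α_1⋯α_p)/(β_1⋯β_{p+1}) · z) for all z > 0. -/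
/-!
Write `c_k = ∏_{m<k} r_m` for the coefficients of `ₚF_{p+1}(z) = ∑ c_k z^k / k!`, where
`r_m = ∏ (α_i + m) / ∏ (β_j + m)`. Pairing `α_i` with `β_{i+1}` and leaving `1 / (β_1 + m)` over
shows that `r` is antitone. Then `c_k ≤ r_0^k`, which gives the exponential bound, and
`c_i c_{j+1} ≤ c_{i+1} c_j` for `i ≤ j`. For `f = ∑ c_k z^k / k!` and `x ≤ y`, expanding
`f'(x) f(y) - f'(y) f(x)` as a double series and pairing the `(i, j)` and `(j, i)` terms gives
`(c_{i+1} c_j - c_{j+1} c_i) (x^i y^j - x^j y^i) / (i! j!) ≥ 0`, so `f' / f` is antitone.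
-/

open Finset Real Set

noncomputable def egf (a : ℕ → ℝ) (z : ℝ) : ℝ := ∑' k, a k * z ^ k / k.factorial

lemma pow_mul_pow_le_pow_mul_pow_s18 {x y : ℝ} (hx : 0 ≤ x) (hxy : x ≤ y) {i j : ℕ} (hij : i ≤ j) :
    x ^ j * y ^ i ≤ x ^ i * y ^ j := by
  obtain ⟨d, rfl⟩ := Nat.exists_eq_add_of_le hij
  calc x ^ (i + d) * y ^ i = (x ^ i * y ^ i) * x ^ d := by ring
    _ ≤ (x ^ i * y ^ i) * y ^ d := by
      have hy : 0 ≤ y := hx.trans hxy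
      gcongr
    _ = x ^ i * y ^ (i + d) := by ring

lemma mul_natCast_mul_pow_pred_div_factorial_succ (b y : ℝ) (k : ℕ) :
    b * ((k + 1 : ℕ) * y ^ (k + 1 - 1)) / (k + 1).factorial = b * y ^ k / k.factorial := by
  rw [Nat.add_sub_cancel, Nat.factorial_succ, Nat.cast_mul]
  field_simp

lemma tsum_nonneg_of_add_swap_nonneg {α : Type*} {f : α × α → ℝ} (hf : Summable f)
    (h : ∀ q : α × α, 0 ≤ f q + f q.swap) : 0 ≤ ∑' q, f q := by
  have hswap : ∑' q : α × α, f q.swap = ∑' q, f q := (Equiv.prodComm α α).tsum_eq f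
  have hf_swap : Summable fun q : α × α => f q.swap := (Equiv.prodComm α α).summable_iff.mpr hf
  have hsum := tsum_nonneg (L := .unconditional _) h
  rw [hf.tsum_add hf_swap, hswap] at hsum
  linarith

section egf

variable {a c : ℕ → ℝ} {M C : ℝ}

lemma summable_norm_egf (ha : ∀ k, |a k| ≤ M * C ^ k) (z : ℝ) :
    Summable fun k => ‖a k * z ^ k / k.factorial‖ := by
  refine .of_nonneg_of_le (fun _ => norm_nonneg _) (fun k => ?_)
    ((Real.summable_pow_div_factorial (C * |z|)).mul_left M)
  rw [Real.norm_eq_abs, abs_div, abs_mul, abs_pow, Nat.abs_cast, mul_pow, ← mul_div_assoc,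
    ← mul_assoc]
  gcongr
  exact ha k

lemma summable_egf (ha : ∀ k, |a k| ≤ M * C ^ k) (z : ℝ) :
    Summable fun k => a k * z ^ k / k.factorial :=
  (summable_norm_egf ha z).of_norm

lemma egf_pos (hc : ∀ k, 0 ≤ c k) (hc0 : 0 < c 0) (hbound : ∀ k, |c k| ≤ M * C ^ k) {z : ℝ}
    (hz : 0 ≤ z) : 0 < egf c z := by
  have h0 := (summable_egf hbound z).le_tsum 0 fun k _ => by have := hc k; positivity
  simp only [pow_zero, Nat.factorial_zero, Nat.cast_one, mul_one, div_one] at h0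
  exact hc0.trans_le h0

lemma abs_succ_le_mul_pow (ha : ∀ k, |a k| ≤ M * C ^ k) (k : ℕ) :
    |a (k + 1)| ≤ (M * C) * C ^ k := by
  rw [mul_assoc, ← pow_succ']
  exact ha _

lemma hasDerivAt_egf (ha : ∀ k, |a k| ≤ M * C ^ k) (x : ℝ) :
    HasDerivAt (egf a) (egf (fun k => a (k + 1)) x) x := by
  set R := |x| + 1
  have hR : 0 < R := by positivity
  have ha' := abs_succ_le_mul_pow ha
  let u : ℕ → ℝ := fun n => |a n| * (n * R ^ (n - 1)) / n.factorial
  have hu : Summable u := by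
    refine (summable_nat_add_iff 1).mp ((summable_norm_egf ha' R).congr fun k => ?_)
    rw [Real.norm_eq_abs, abs_div, abs_mul, abs_pow, abs_of_pos hR, Nat.abs_cast]
    exact (mul_natCast_mul_pow_pred_div_factorial_succ _ _ _).symm
  have hu_bound : ∀ n, ∀ y ∈ Ioo (-R) R, ‖a n * (n * y ^ (n - 1)) / n.factorial‖ ≤ u n := by
    intro n y hy
    have hy' : |y| ≤ R := (abs_lt.mpr hy).le
    simp only [u, Real.norm_eq_abs, abs_div, abs_mul, abs_pow, Nat.abs_cast]
    gcongr
  refine (hasDerivAt_tsum_of_isPreconnected hu isOpen_Ioo isPreconnected_Ioo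
    (fun n y _ => ((hasDerivAt_pow n y).const_mul (a n)).div_const _) hu_bound
    ⟨by linarith, hR⟩ (summable_egf ha 0) (abs_lt.mp (lt_add_one |x|))).congr_deriv ?_
  rw [tsum_eq_zero_add' ?_]
  · simp only [mul_natCast_mul_pow_pred_div_factorial_succ]
    simp [egf]
  · simpa only [mul_natCast_mul_pow_pred_div_factorial_succ] using summable_egf ha' x

lemma ratio_sub_mul_pow_sub_nonneg (hlc : ∀ i j, i ≤ j → c i * c (j + 1) ≤ c (i + 1) * c j)
    {x y : ℝ} (hx : 0 ≤ x) (hxy : x ≤ y) (i j : ℕ) :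
    0 ≤ (c (i + 1) * c j - c (j + 1) * c i) * (x ^ i * y ^ j - x ^ j * y ^ i) := by
  rcases le_total i j with h | h
  · exact mul_nonneg (by linarith [hlc i j h])
      (sub_nonneg.2 (pow_mul_pow_le_pow_mul_pow_s18 hx hxy h))
  · exact mul_nonneg_of_nonpos_of_nonpos (by linarith [hlc j i h])
      (sub_nonpos.2 (pow_mul_pow_le_pow_mul_pow_s18 hx hxy h))

lemma egf_succ_mul_egf_le (hbound : ∀ k, |c k| ≤ M * C ^ k)
    (hlc : ∀ i j, i ≤ j → c i * c (j + 1) ≤ c (i + 1) * c j) {x y : ℝ} (hx : 0 ≤ x)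
    (hxy : x ≤ y) :
    egf (fun k => c (k + 1)) y * egf c x ≤ egf (fun k => c (k + 1)) x * egf c y := by
  have hbound' := abs_succ_le_mul_pow hbound
  have hA := summable_mul_of_summable_norm (summable_norm_egf hbound' y)
    (summable_norm_egf hbound x)
  have hB := summable_mul_of_summable_norm (summable_norm_egf hbound' x)
    (summable_norm_egf hbound y)
  simp only [egf]
  rw [tsum_mul_tsum_of_summable_norm (summable_norm_egf hbound' y) (summable_norm_egf hbound x),
    tsum_mul_tsum_of_summable_norm (summable_norm_egf hbound' x) (summable_norm_egf hbound y),
    ← sub_nonneg, ← hB.tsum_sub hA]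
  refine tsum_nonneg_of_add_swap_nonneg (hB.sub hA) fun ⟨i, j⟩ => ?_
  have hpair : c (i + 1) * x ^ i / i.factorial * (c j * y ^ j / j.factorial) -
      c (i + 1) * y ^ i / i.factorial * (c j * x ^ j / j.factorial) +
      (c (j + 1) * x ^ j / j.factorial * (c i * y ^ i / i.factorial) -
      c (j + 1) * y ^ j / j.factorial * (c i * x ^ i / i.factorial)) =
      (c (i + 1) * c j - c (j + 1) * c i) * (x ^ i * y ^ j - x ^ j * y ^ i) /
        (i.factorial * j.factorial) := by
    field_simp
    ring
  simp only [Prod.swap]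
  rw [hpair]
  exact div_nonneg (ratio_sub_mul_pow_sub_nonneg hlc hx hxy i j) (by positivity)

theorem concaveOn_log_egf (hc : ∀ k, 0 ≤ c k) (hc0 : 0 < c 0) (hbound : ∀ k, |c k| ≤ M * C ^ k)
    (hlc : ∀ i j, i ≤ j → c i * c (j + 1) ≤ c (i + 1) * c j) :
    ConcaveOn ℝ (Ioi 0) fun z => log (egf c z) := by
  have hpos : ∀ z ∈ Ioi (0 : ℝ), 0 < egf c z := fun z hz => egf_pos hc hc0 hbound (le_of_lt hz)
  have hderiv : ∀ z ∈ Ioi (0 : ℝ),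
      HasDerivAt (fun z => log (egf c z)) (egf (fun k => c (k + 1)) z / egf c z) z :=
    fun z hz => (hasDerivAt_egf hbound z).log (hpos z hz).ne'
  refine AntitoneOn.concaveOn_of_deriv (convex_Ioi 0)
    (fun z hz => (hderiv z hz).continuousAt.continuousWithinAt) ?_ ?_ <;> rw [interior_Ioi]
  · exact fun z hz => (hderiv z hz).differentiableAt.differentiableWithinAt
  · intro x hx y hy hxy
    rw [(hderiv x hx).deriv, (hderiv y hy).deriv, div_le_div_iff₀ (hpos y hy) (hpos x hx)]
    exact egf_succ_mul_egf_le hbound hlc (le_of_lt hx) hxy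

theorem egf_le_exp (hbound : ∀ k, |c k| ≤ C ^ k) {z : ℝ} (hz : 0 ≤ z) :
    egf c z ≤ exp (C * z) := by
  rw [Real.exp_eq_exp_ℝ, NormedSpace.exp_eq_tsum_div]
  refine (summable_egf (M := 1) (by simpa using hbound) z).tsum_le_tsum (fun k => ?_)
    (Real.summable_pow_div_factorial _)
  rw [mul_pow]
  gcongr
  exact (le_abs_self _).trans (hbound k)

end egf

section prodRange

variable {r : ℕ → ℝ}

lemma abs_prod_range_le_pow_of_antitone (hr0 : ∀ m, 0 ≤ r m) (hr : Antitone r) (k : ℕ) :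
    |∏ m ∈ range k, r m| ≤ r 0 ^ k := by
  rw [abs_of_nonneg (prod_nonneg fun m _ => hr0 m)]
  exact (prod_le_prod (fun m _ => hr0 m) fun m _ => hr (Nat.zero_le m)).trans_eq (by simp)

lemma prod_range_mul_prod_range_succ_le (hr0 : ∀ m, 0 ≤ r m) (hr : Antitone r) {i j : ℕ}
    (hij : i ≤ j) :
    (∏ m ∈ range i, r m) * ∏ m ∈ range (j + 1), r m ≤
      (∏ m ∈ range (i + 1), r m) * ∏ m ∈ range j, r m := by
  have hprod : 0 ≤ (∏ m ∈ range i, r m) * ∏ m ∈ range j, r m :=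
    mul_nonneg (prod_nonneg fun m _ => hr0 m) (prod_nonneg fun m _ => hr0 m)
  rw [prod_range_succ, prod_range_succ]
  calc _ = ((∏ m ∈ range i, r m) * ∏ m ∈ range j, r m) * r j := by ring
    _ ≤ ((∏ m ∈ range i, r m) * ∏ m ∈ range j, r m) * r i := by gcongr; exact hr hij
    _ = _ := by ring

theorem concaveOn_log_egf_prod_range (hr0 : ∀ m, 0 ≤ r m) (hr : Antitone r) :
    ConcaveOn ℝ (Ioi 0) fun z => log (egf (fun k => ∏ m ∈ range k, r m) z) :=
  concaveOn_log_egf (fun k => prod_nonneg fun m _ => hr0 m) (by simp)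
    (fun k => (abs_prod_range_le_pow_of_antitone hr0 hr k).trans_eq (one_mul _).symm)
    fun _ _ => prod_range_mul_prod_range_succ_le hr0 hr

theorem egf_prod_range_le_exp (hr0 : ∀ m, 0 ≤ r m) (hr : Antitone r) {z : ℝ} (hz : 0 ≤ z) :
    egf (fun k => ∏ m ∈ range k, r m) z ≤ exp (r 0 * z) :=
  egf_le_exp (abs_prod_range_le_pow_of_antitone hr0 hr) hz

end prodRange

section hypergeometric

variable {p q : ℕ}

noncomputable def hypergeometricRatio (α : Fin p → ℝ) (β : Fin q → ℝ) (m : ℕ) : ℝ :=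
  (∏ i, (α i + m)) / ∏ j, (β j + m)

lemma prod_range_hypergeometricRatio (α : Fin p → ℝ) (β : Fin q → ℝ) (k : ℕ) :
    ∏ m ∈ range k, hypergeometricRatio α β m =
      (∏ i, ∏ m ∈ range k, (α i + m)) / ∏ j, ∏ m ∈ range k, (β j + m) := by
  rw [prod_comm (s := univ), prod_comm (s := univ), ← prod_div_distrib]
  rfl

lemma hypergeometricRatio_zero (α : Fin p → ℝ) (β : Fin q → ℝ) :
    hypergeometricRatio α β 0 = (∏ i, α i) / ∏ j, β j := by
  simp [hypergeometricRatio]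

lemma hypergeometricRatio_nonneg {α : Fin p → ℝ} {β : Fin q → ℝ} (hα : ∀ i, 0 ≤ α i)
    (hβ : ∀ j, 0 ≤ β j) (m : ℕ) : 0 ≤ hypergeometricRatio α β m :=
  div_nonneg (prod_nonneg fun i _ => by have := hα i; positivity)
    (prod_nonneg fun j _ => by have := hβ j; positivity)

lemma antitone_add_div_add {a b : ℝ} (hb : 0 < b) (hba : b ≤ a) :
    Antitone fun m : ℕ => (a + m) / (b + m) := by
  intro m n hmn
  have hmn' : (m : ℝ) ≤ n := by exact_mod_cast hmn
  rw [div_le_div_iff₀ (by positivity) (by positivity)]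
  nlinarith

lemma hypergeometricRatio_eq_prod_div (α : Fin p → ℝ) (β : Fin (p + 1) → ℝ) (m : ℕ) :
    hypergeometricRatio α β m = (∏ i, (α i + m) / (β i.succ + m)) / (β 0 + m) := by
  rw [hypergeometricRatio, Fin.prod_univ_succ, prod_div_distrib, div_div, mul_comm]

lemma antitone_hypergeometricRatio {α : Fin p → ℝ} {β : Fin (p + 1) → ℝ} (hβ : ∀ j, 0 < β j)
    (hαβ : ∀ i, β i.succ ≤ α i) : Antitone (hypergeometricRatio α β) := by
  have hfactor_nonneg : ∀ i (m : ℕ), 0 ≤ (α i + m) / (β i.succ + m) := fun i m =>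
    div_nonneg (add_nonneg ((hβ i.succ).le.trans (hαβ i)) m.cast_nonneg)
      (add_nonneg (hβ i.succ).le m.cast_nonneg)
  intro m n hmn
  simp only [hypergeometricRatio_eq_prod_div]
  refine div_le_div₀ (prod_nonneg fun i _ => hfactor_nonneg i m)
    (prod_le_prod (fun i _ => hfactor_nonneg i n)
      fun i _ => antitone_add_div_add (hβ i.succ) (hαβ i) hmn)
    (by have := hβ 0; positivity) (by gcongr)

end hypergeometric

theorem pFq_logConcave_general (p : ℕ) (α : Fin p → ℝ) (β : Fin (p + 1) → ℝ)
    (hβ : ∀ j, 0 < β j) (hαβ : ∀ i : Fin p, β i.succ ≤ α i) :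
    ConcaveOn ℝ (Set.Ioi 0) (fun z : ℝ =>
      Real.log (∑' k : ℕ, (∏ i, ∏ m ∈ Finset.range k, (α i + m)) /
        (∏ j, ∏ m ∈ Finset.range k, (β j + m)) * z ^ k / (k.factorial : ℝ))) ∧
    ∀ z : ℝ, 0 < z →
      (∑' k : ℕ, (∏ i, ∏ m ∈ Finset.range k, (α i + m)) /
          (∏ j, ∏ m ∈ Finset.range k, (β j + m)) * z ^ k / (k.factorial : ℝ)) ≤
        Real.exp ((∏ i, α i) / (∏ j, β j) * z) := by
  have hr0 := hypergeometricRatio_nonneg (fun i => (hβ i.succ).le.trans (hαβ i))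
    (fun j => (hβ j).le)
  have hr := antitone_hypergeometricRatio hβ hαβ
  simp only [← prod_range_hypergeometricRatio, ← hypergeometricRatio_zero α β]
  exact ⟨concaveOn_log_egf_prod_range hr0 hr, fun z hz => egf_prod_range_le_exp hr0 hr hz.le⟩

theorem pFq_logConcave (p : ℕ) (α : Fin p → ℝ) (β : Fin (p + 1) → ℝ)
    (hα : ∀ i, 0 < α i) (hβ : ∀ j, 0 < β j) (hαβ : ∀ i : Fin p, β i.succ ≤ α i) :
    ConcaveOn ℝ (Set.Ioi 0) (fun z : ℝ =>
      Real.log (∑' k : ℕ, (∏ i, ∏ m ∈ Finset.range k, (α i + m)) /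
        (∏ j, ∏ m ∈ Finset.range k, (β j + m)) * z ^ k / (k.factorial : ℝ))) ∧
    ∀ z : ℝ, 0 < z →
      (∑' k : ℕ, (∏ i, ∏ m ∈ Finset.range k, (α i + m)) /
          (∏ j, ∏ m ∈ Finset.range k, (β j + m)) * z ^ k / (k.factorial : ℝ)) ≤
        Real.exp ((∏ i, α i) / (∏ j, β j) * z) :=
  pFq_logConcave_general p α β hβ hαβ
end
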